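/- arXiv:2603.21628 — 8 statements merged into one kernel-verified Lean document; each statement's English description precedes it below -/
import Mathlib

section
/- Let a > 0 and let (e_s)_{s∈ℕ} be an orthonormal basis of the real Hilbert space L²(ℝ, γ_a). For δ ∈ {+1, -1} and s ∈ ℕ define E_{δ,s} : ℝ → ℝ by E_{δ,s}(y) = √2 · e_s(δy) if δy > 0, and E_{δ,s}(y) = 0 otherwise. Then the doubly indexed family (E_{δ,s})_{δ∈{+1,-1}, s∈ℕ} is an orthonormal basis of L²(ℝ, λ_a). -/
open MeasureTheory
open scoped ENNReal

/-- The generalized Laplace measure `λ_a` on `ℝ`, with density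
`l_a(y) = (1/(2Γ(a))) e^{-|y|} |y|^{a-1}` with respect to Lebesgue measure. -/
noncomputable def laplaceM (a : ℝ) : Measure ℝ :=
  volume.withDensity fun y =>
    ENNReal.ofReal (1 / (2 * Real.Gamma a) * Real.exp (-|y|) * |y| ^ (a - 1))

/-- The gamma probability measure `γ_a` on `ℝ`, with density
`g_a(y) = (1/Γ(a)) e^{-y} y^{a-1}` on `(0,∞)` and `0` on `(-∞,0]`. -/
noncomputable def gammaM (a : ℝ) : Measure ℝ :=
  volume.withDensity fun y =>
    ENNReal.ofReal (if 0 < y then 1 / Real.Gamma a * Real.exp (-y) * y ^ (a - 1) else 0)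

/-- The sign `±1` encoded by a boolean. -/
def sgn (δ : Bool) : ℝ := if δ then 1 else -1

/-- The reflected-dilated family `E_{δ,s}(y) = √2 e_s(δ y)` on the half-line `δ y > 0`,
`0` elsewhere. -/
noncomputable def halfLineFun (e : ℕ → ℝ → ℝ) (p : Bool × ℕ) (y : ℝ) : ℝ :=
  if 0 < sgn p.1 * y then Real.sqrt 2 * e p.2 (sgn p.1 * y) else 0

/-!
Negation preserves `λ_a`, and `λ_a` restricted to `(0, ∞)` is `γ_a / 2`; hence `y ↦ δ y` carries
`λ_a` on the half-line `{δ y > 0}` to `γ_a / 2`, and `f ↦ √2 · 1_{δ y > 0} · f(δ y)` is an isometry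
of `L²(γ_a)` into `L²(λ_a)`. The two images (`δ = ±1`) are orthogonal because their supports are
disjoint. A function orthogonal to both images, transported back to `L²(γ_a)`, is orthogonal to
every `e_s` and so vanishes; it therefore vanishes on both half-lines, hence `λ_a`-a.e.
-/

open Set
open scoped InnerProductSpace

namespace MeasureTheory

section L2

variable {α ι : Type*} [MeasurableSpace α] {μ : Measure α}

theorem L2.real_inner_toLp_toLp {f g : α → ℝ} (hf : MemLp f 2 μ)
    (hg : MemLp g 2 μ) : ⟪hf.toLp f, hg.toLp g⟫_ℝ = ∫ x, f x * g x ∂μ := by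
  rw [L2.inner_def]
  refine integral_congr_ae ?_
  filter_upwards [hf.coeFn_toLp, hg.coeFn_toLp] with x hfx hgx
  simp [hfx, hgx, mul_comm]

theorem topologicalClosure_span_range_toLp_eq_top_iff {e : ι → α → ℝ}
    (he : ∀ s, MemLp (e s) 2 μ) :
    (Submodule.span ℝ (range fun s => (he s).toLp (e s))).topologicalClosure = ⊤ ↔
      ∀ g : α → ℝ, MemLp g 2 μ → (∀ s, ∫ x, e s x * g x ∂μ = 0) → g =ᵐ[μ] 0 := by
  rw [Submodule.topologicalClosure_eq_top_iff, Submodule.eq_bot_iff]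
  constructor
  · intro h g hg horth
    have hperp : hg.toLp g ∈ (Submodule.span ℝ (range fun s => (he s).toLp (e s)))ᗮ := by
      rw [← Submodule.span_singleton_le_iff_mem, ← Submodule.isOrtho_iff_le,
        Submodule.isOrtho_comm, Submodule.isOrtho_span]
      rintro _ ⟨s, rfl⟩ _ rfl
      rw [L2.real_inner_toLp_toLp, horth]
    exact hg.coeFn_toLp.symm.trans (Lp.eq_zero_iff_ae_eq_zero.mp (h _ hperp))
  · intro h f hf
    refine Lp.eq_zero_iff_ae_eq_zero.mpr (h f (Lp.memLp f) fun s => ?_)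
    rw [← L2.real_inner_toLp_toLp (he s) (Lp.memLp f), Lp.toLp_coeFn]
    exact Submodule.inner_right_of_mem_orthogonal (Submodule.subset_span (mem_range_self s)) hf

end L2

section Transfer

variable {α β E : Type*} [MeasurableSpace α] [MeasurableSpace β] [NormedAddCommGroup E]
  {ν : Measure α} {μ : Measure β} {H : Set α} {φ : α ≃ᵐ β} {c : ℝ≥0∞}

theorem MeasurePreserving.map_withDensity (hφ : MeasurePreserving φ ν μ)
    (f : α → ℝ≥0∞) : (ν.withDensity f).map φ = μ.withDensity (f ∘ φ.symm) := by
  ext s hs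
  rw [φ.map_apply, withDensity_apply _ (φ.measurable hs), withDensity_apply _ hs,
    ← hφ.setLIntegral_comp_preimage_emb φ.measurableEmbedding]
  simp

theorem memLp_indicator_comp_of_map_restrict (hH : MeasurableSet H)
    (hmap : (ν.restrict H).map φ = c • μ) (hc : c ≠ ∞) {p : ℝ≥0∞} {f : β → E}
    (hf : MemLp f p μ) : MemLp (H.indicator (f ∘ φ)) p ν := by
  rw [memLp_indicator_iff_restrict hH, ← φ.measurableEmbedding.memLp_map_measure_iff, hmap]
  exact hf.smul_measure hc

theorem integral_indicator_comp_of_map_restrict [NormedSpace ℝ E] (hH : MeasurableSet H)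
    (hmap : (ν.restrict H).map φ = c • μ) (f : β → E) :
    ∫ x, H.indicator (f ∘ φ) x ∂ν = c.toReal • ∫ y, f y ∂μ := by
  rw [integral_indicator hH]
  simp only [Function.comp_apply]
  rw [← φ.measurableEmbedding.integral_map, hmap, integral_smul_measure]

theorem memLp_comp_symm_of_map_restrict (hmap : (ν.restrict H).map φ = c • μ) (hc : c ≠ 0)
    (hc' : c ≠ ∞) {p : ℝ≥0∞} {g : α → E} (hg : MemLp g p (ν.restrict H)) :
    MemLp (g ∘ φ.symm) p μ := by
  have hcμ : MemLp (g ∘ φ.symm) p (c • μ) := by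
    rw [← hmap, φ.measurableEmbedding.memLp_map_measure_iff]
    simpa [Function.comp_def] using hg
  simpa [smul_smul, ENNReal.inv_mul_cancel hc hc'] using
    hcμ.smul_measure (ENNReal.inv_ne_top.mpr hc)

theorem ae_restrict_of_map_restrict (hmap : (ν.restrict H).map φ = c • μ) (hc : c ≠ 0)
    {P : α → Prop} (hP : ∀ᵐ y ∂μ, P (φ.symm y)) : ∀ᵐ x ∂ν.restrict H, P x := by
  rw [← Measure.ae_ennreal_smul_measure_eq hc, ← hmap, φ.measurableEmbedding.ae_map_iff] at hP
  simpa using hP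

end Transfer

end MeasureTheory

theorem sgn_ne_zero (δ : Bool) : sgn δ ≠ 0 := by cases δ <;> norm_num [sgn]

theorem sgn_mul_sgn (δ : Bool) : sgn δ * sgn δ = 1 := by cases δ <;> norm_num [sgn]

theorem abs_sgn (δ : Bool) : |sgn δ| = 1 := by cases δ <;> norm_num [sgn]

noncomputable def sgnMul (δ : Bool) : ℝ ≃ᵐ ℝ := MeasurableEquiv.mulLeft₀ (sgn δ) (sgn_ne_zero δ)

theorem sgnMul_apply (δ : Bool) (y : ℝ) : sgnMul δ y = sgn δ * y := rfl

theorem sgnMul_symm (δ : Bool) : (sgnMul δ).symm = sgnMul δ := by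
  ext y
  rw [MeasurableEquiv.symm_apply_eq, sgnMul_apply, sgnMul_apply, ← mul_assoc, sgn_mul_sgn, one_mul]

theorem measurePreserving_sgnMul (δ : Bool) : MeasurePreserving (sgnMul δ) volume volume := by
  refine ⟨(sgnMul δ).measurable, ?_⟩
  rw [show ⇑(sgnMul δ) = (sgn δ * ·) from rfl, Real.map_volume_mul_left (sgn_ne_zero δ), abs_inv,
    abs_sgn, inv_one, ENNReal.ofReal_one, one_smul]

theorem map_sgnMul_laplaceM (a : ℝ) (δ : Bool) : (laplaceM a).map (sgnMul δ) = laplaceM a := by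
  rw [laplaceM, (measurePreserving_sgnMul δ).map_withDensity, sgnMul_symm]
  congr 1
  funext y
  simp [sgnMul_apply, abs_mul, abs_sgn]

theorem laplaceM_restrict_Ioi (a : ℝ) :
    (laplaceM a).restrict (Ioi 0) = (2⁻¹ : ℝ≥0∞) • gammaM a := by
  rw [laplaceM, gammaM, restrict_withDensity measurableSet_Ioi,
    ← withDensity_indicator measurableSet_Ioi, ← withDensity_smul' _ _ (by norm_num)]
  congr 1
  funext y
  by_cases hy : 0 < y
  · rw [indicator_of_mem (mem_Ioi.mpr hy), Pi.smul_apply, if_pos hy, smul_eq_mul, abs_of_pos hy,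
      ← ENNReal.ofReal_ofNat 2, ← ENNReal.ofReal_inv_of_pos two_pos,
      ← ENNReal.ofReal_mul (by norm_num)]
    congr 1
    ring
  · rw [indicator_of_notMem (show y ∉ Ioi 0 from hy), Pi.smul_apply, if_neg hy,
      ENNReal.ofReal_zero, smul_zero]

theorem measurableSet_sgnMul_preimage_Ioi (δ : Bool) : MeasurableSet (sgnMul δ ⁻¹' Ioi 0) :=
  (sgnMul δ).measurable measurableSet_Ioi

theorem map_restrict_halfLine_laplaceM (a : ℝ) (δ : Bool) :
    ((laplaceM a).restrict (sgnMul δ ⁻¹' Ioi 0)).map (sgnMul δ) = (2⁻¹ : ℝ≥0∞) • gammaM a := by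
  rw [← MeasurableEquiv.restrict_map, map_sgnMul_laplaceM, laplaceM_restrict_Ioi]

theorem ae_of_forall_ae_restrict_halfLine {μ : Measure ℝ} (hμ : μ {0} = 0) {P : ℝ → Prop}
    (hP : ∀ δ, ∀ᵐ y ∂μ.restrict (sgnMul δ ⁻¹' Ioi 0), P y) : ∀ᵐ y ∂μ, P y := by
  have hcover : ∀ᵐ y ∂μ, y ∈ sgnMul true ⁻¹' Ioi 0 ∪ sgnMul false ⁻¹' Ioi 0 := by
    filter_upwards [measure_eq_zero_iff_ae_notMem.mp hμ] with y hy
    rcases lt_or_gt_of_ne (show y ≠ 0 from hy) with hneg | hpos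
    · exact Or.inr (by simpa [sgnMul_apply, sgn] using hneg)
    · exact Or.inl (by simpa [sgnMul_apply, sgn] using hpos)
  rw [← Measure.restrict_eq_self_of_ae_mem hcover, ae_restrict_union_iff]
  exact ⟨hP true, hP false⟩

theorem halfLineFun_eq_indicator (e : ℕ → ℝ → ℝ) (δ : Bool) (s : ℕ) :
    halfLineFun e (δ, s) = (sgnMul δ ⁻¹' Ioi 0).indicator ((fun u => √2 * e s u) ∘ sgnMul δ) := by
  funext y
  simp [halfLineFun, indicator, sgnMul_apply]

theorem memLp_halfLineFun {a : ℝ} {e : ℕ → ℝ → ℝ} {s : ℕ} (he : MemLp (e s) 2 (gammaM a))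
    (δ : Bool) : MemLp (halfLineFun e (δ, s)) 2 (laplaceM a) := by
  rw [halfLineFun_eq_indicator]
  exact memLp_indicator_comp_of_map_restrict (measurableSet_sgnMul_preimage_Ioi δ)
    (map_restrict_halfLine_laplaceM a δ) (by norm_num) (he.const_mul √2)

theorem halfLineFun_mul_halfLineFun_of_ne (e : ℕ → ℝ → ℝ) {δ δ' : Bool} (h : δ ≠ δ') (s t : ℕ)
    (y : ℝ) : halfLineFun e (δ, s) y * halfLineFun e (δ', t) y = 0 := by
  have hsgn : sgn δ' = -sgn δ := by cases δ <;> cases δ' <;> simp_all [sgn]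
  simp only [halfLineFun, hsgn, neg_mul]
  split_ifs <;> linarith

theorem integral_halfLineFun_mul_halfLineFun (a : ℝ) (e : ℕ → ℝ → ℝ) (δ δ' : Bool) (s t : ℕ) :
    ∫ y, halfLineFun e (δ, s) y * halfLineFun e (δ', t) y ∂laplaceM a =
      if δ = δ' then ∫ u, e s u * e t u ∂gammaM a else 0 := by
  split_ifs with h
  · subst h
    have hprod : (fun y => halfLineFun e (δ, s) y * halfLineFun e (δ, t) y) =
        (sgnMul δ ⁻¹' Ioi 0).indicator ((fun u => 2 * (e s u * e t u)) ∘ sgnMul δ) := by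
      rw [halfLineFun_eq_indicator, halfLineFun_eq_indicator, ← indicator_mul]
      congr 1
      funext y
      simp only [Function.comp_apply]
      rw [mul_mul_mul_comm, Real.mul_self_sqrt zero_le_two]
    rw [hprod, integral_indicator_comp_of_map_restrict (measurableSet_sgnMul_preimage_Ioi δ)
      (map_restrict_halfLine_laplaceM a δ), integral_const_mul, ENNReal.toReal_inv,
      ENNReal.toReal_ofNat, smul_eq_mul]
    ring
  · simp [halfLineFun_mul_halfLineFun_of_ne e h]

theorem ae_eq_zero_of_forall_integral_halfLineFun_mul_eq_zero {a : ℝ} {e : ℕ → ℝ → ℝ}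
    (he : ∀ s, MemLp (e s) 2 (gammaM a))
    (hdense : (Submodule.span ℝ (range fun s => (he s).toLp (e s))).topologicalClosure = ⊤)
    {f : ℝ → ℝ} (hf : MemLp f 2 (laplaceM a))
    (horth : ∀ p, ∫ y, halfLineFun e p y * f y ∂laplaceM a = 0) : f =ᵐ[laplaceM a] 0 := by
  refine ae_of_forall_ae_restrict_halfLine
    ((withDensity_absolutelyContinuous _ _) Real.volume_singleton) fun δ => ?_
  have hmap := map_restrict_halfLine_laplaceM a δ
  have hg : MemLp (f ∘ (sgnMul δ).symm) 2 (gammaM a) :=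
    memLp_comp_symm_of_map_restrict hmap (by norm_num) (by norm_num) (hf.restrict _)
  refine ae_restrict_of_map_restrict hmap (by norm_num)
    ((topologicalClosure_span_range_toLp_eq_top_iff he).mp hdense _ hg fun s => ?_)
  have hpointwise : (sgnMul δ ⁻¹' Ioi 0).indicator
      ((fun u => e s u * (f ∘ (sgnMul δ).symm) u) ∘ sgnMul δ) =
        fun y => (√2)⁻¹ * (halfLineFun e (δ, s) y * f y) := by
    rw [halfLineFun_eq_indicator]
    funext y
    by_cases hy : y ∈ sgnMul δ ⁻¹' Ioi 0
    · simp [hy, field]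
    · simp [hy]
  calc ∫ u, e s u * (f ∘ (sgnMul δ).symm) u ∂gammaM a
      = 2 * ∫ y, (√2)⁻¹ * (halfLineFun e (δ, s) y * f y) ∂laplaceM a := by
        rw [← hpointwise, integral_indicator_comp_of_map_restrict
          (measurableSet_sgnMul_preimage_Ioi δ) hmap, ENNReal.toReal_inv,
          ENNReal.toReal_ofNat, smul_eq_mul]
        ring
    _ = 0 := by rw [integral_const_mul, horth, mul_zero, mul_zero]

theorem halfLineFun_orthonormalBasis_laplaceM_general (a : ℝ)
    (e : ℕ → ℝ → ℝ) (he : ∀ s, MemLp (e s) 2 (gammaM a))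
    (hon : Orthonormal ℝ fun s => (he s).toLp (e s))
    (hdense : (Submodule.span ℝ
        (Set.range fun s => (he s).toLp (e s))).topologicalClosure = ⊤) :
    ∃ hE : ∀ p : Bool × ℕ, MemLp (halfLineFun e p) 2 (laplaceM a),
      Orthonormal ℝ (fun p => (hE p).toLp (halfLineFun e p)) ∧
        (Submodule.span ℝ
          (Set.range fun p => (hE p).toLp (halfLineFun e p))).topologicalClosure = ⊤ := by
  refine ⟨fun p => memLp_halfLineFun (he p.2) p.1, ?_, ?_⟩
  · rw [orthonormal_iff_ite] at hon ⊢
    rintro ⟨δ, s⟩ ⟨δ', t⟩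
    rw [L2.real_inner_toLp_toLp, integral_halfLineFun_mul_halfLineFun,
      ← L2.real_inner_toLp_toLp (he s) (he t), hon]
    by_cases h : δ = δ' <;> simp [h]
  · exact (topologicalClosure_span_range_toLp_eq_top_iff _).mpr fun f hf horth =>
      ae_eq_zero_of_forall_integral_halfLineFun_mul_eq_zero he hdense hf horth

/-- If `(e_s)_{s∈ℕ}` is an orthonormal basis of `L²(ℝ, γ_a)`, then the doubly indexed family
`(E_{δ,s})`, with `E_{δ,s}(y) = √2 e_s(δ y)` for `δ y > 0` and `0` otherwise,
is an orthonormal basis of `L²(ℝ, λ_a)`. -/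
theorem halfLineFun_orthonormalBasis_laplaceM (a : ℝ) (ha : 0 < a)
    (e : ℕ → ℝ → ℝ) (he : ∀ s, MemLp (e s) 2 (gammaM a))
    (hon : Orthonormal ℝ fun s => (he s).toLp (e s))
    (hdense : (Submodule.span ℝ
        (Set.range fun s => (he s).toLp (e s))).topologicalClosure = ⊤) :
    ∃ hE : ∀ p : Bool × ℕ, MemLp (halfLineFun e p) 2 (laplaceM a),
      Orthonormal ℝ (fun p => (hE p).toLp (halfLineFun e p)) ∧
        (Submodule.span ℝ
          (Set.range fun p => (hE p).toLp (halfLineFun e p))).topologicalClosure = ⊤ :=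
  halfLineFun_orthonormalBasis_laplaceM_general a e he hon hdense
end

section
/- Let a > 0, s ∈ ℝ, and let v, w : ℝ → ℝ be twice continuously differentiable on (0,∞), where w satisfies the eigenvalue equation (Dw)(y) = s·w(y) for all y > 0. Assume that the functions y ↦ (Dv)(y) w(y) and y ↦ v(y) w(y) are γ_a-integrable on (0,∞), and that e^{-y} y^a (v'(y) w(y) - v(y) w'(y)) → 0 both as y → 0⁺ and as y → ∞. Then ∫_{(0,∞)} (Dv)(y) w(y) dγ_a(y) = s · ∫_{(0,∞)} v(y) w(y) dγ_a(y). -/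
open MeasureTheory Filter
open scoped ENNReal Topology

/-- The Laguerre differential operator `(D v)(y) = -y v''(y) - (a - y) v'(y)`. -/
noncomputable def lagD (a : ℝ) (v : ℝ → ℝ) : ℝ → ℝ :=
  fun y => -y * deriv (deriv v) y - (a - y) * deriv v y

/-!
On `(0,∞)` the operator is in Sturm–Liouville form, `(D v) g_a = -(e^{-y} y^a v')' / Γ(a)`, so
Lagrange's identity reads `(e^{-y} y^a (v' w - v w'))' = e^{-y} y^{a-1} (v · Dw - Dv · w)`.
Integrating over `(0,∞)`, the boundary term vanishes at both ends, and `Dw = s w` turns the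
integrand into `e^{-y} y^{a-1} (s v w - Dv · w)`.
-/

open Set Real

theorem integral_Ioi_of_hasDerivAt_of_tendsto_nhdsGT {E : Type*} [NormedAddCommGroup E]
    [NormedSpace ℝ E] [CompleteSpace E] {f f' : ℝ → E} {a : ℝ} {m₀ m : E}
    (hderiv : ∀ x ∈ Ioi a, HasDerivAt f (f' x) x) (f'int : IntegrableOn f' (Ioi a))
    (h_zero : Tendsto f (𝓝[>] a) (𝓝 m₀)) (h_infty : Tendsto f atTop (𝓝 m)) :
    ∫ x in Ioi a, f' x = m - m₀ := by
  rw [← Ici_sdiff_left] at h_zero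
  have hderiv' : ∀ x ∈ Ioi a, HasDerivAt (Function.update f a m₀) (f' x) x := fun x hx =>
    (hderiv x hx).congr_of_eventuallyEq <| by
      filter_upwards [eventually_ne_nhds (ne_of_gt hx)] with y hy
      exact Function.update_of_ne hy m₀ f
  have h_infty' : Tendsto (Function.update f a m₀) atTop (𝓝 m) :=
    h_infty.congr' <| by
      filter_upwards [eventually_ne_atTop a] with y hy
      exact (Function.update_of_ne hy m₀ f).symm
  simpa using integral_Ioi_of_hasDerivAt_of_tendsto
    (continuousWithinAt_update_same.mpr h_zero) hderiv' f'int h_infty'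

theorem ContDiffOn.hasDerivAt_of_isOpen {f : ℝ → ℝ} {s : Set ℝ} {x : ℝ} (hf : ContDiffOn ℝ 1 f s)
    (hs : IsOpen s) (hx : x ∈ s) : HasDerivAt f (deriv f x) x :=
  (hf.differentiableOn one_ne_zero |>.differentiableAt (hs.mem_nhds hx)).hasDerivAt

theorem ContDiffOn.hasDerivAt_deriv_of_isOpen {f : ℝ → ℝ} {s : Set ℝ} {x : ℝ}
    (hf : ContDiffOn ℝ 2 f s) (hs : IsOpen s) (hx : x ∈ s) :
    HasDerivAt (deriv f) (deriv (deriv f) x) x :=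
  (hf.deriv_of_isOpen hs le_rfl).hasDerivAt_of_isOpen hs hx

theorem gammaM_eq_withDensity_restrict (a : ℝ) :
    gammaM a = (volume.restrict (Ioi 0)).withDensity
      fun y => ENNReal.ofReal ((Gamma a)⁻¹ * (exp (-y) * y ^ (a - 1))) := by
  rw [gammaM, ← withDensity_indicator measurableSet_Ioi]
  congr 1
  funext y
  by_cases hy : 0 < y <;> simp [hy, mul_assoc]

theorem integral_gammaM {a : ℝ} (ha : 0 < a) (f : ℝ → ℝ) :
    ∫ y, f y ∂gammaM a = (Gamma a)⁻¹ * ∫ y in Ioi 0, exp (-y) * y ^ (a - 1) * f y := by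
  rw [gammaM_eq_withDensity_restrict, integral_withDensity_eq_integral_toReal_smul
    (by fun_prop) (ae_of_all _ fun _ => ENNReal.ofReal_lt_top), ← integral_const_mul]
  refine setIntegral_congr_fun measurableSet_Ioi fun y hy => ?_
  have hnonneg : 0 ≤ (Gamma a)⁻¹ * (exp (-y) * y ^ (a - 1)) := by
    have := Gamma_pos_of_pos ha
    have := rpow_pos_of_pos (show (0:ℝ) < y from hy) (a - 1)
    positivity
  simp only [ENNReal.toReal_ofReal hnonneg, smul_eq_mul]
  ring

theorem MeasureTheory.Integrable.integrableOn_gammaWeight_mul {a : ℝ} (ha : 0 < a) {f : ℝ → ℝ}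
    (hf : Integrable f (gammaM a)) :
    IntegrableOn (fun y => exp (-y) * y ^ (a - 1) * f y) (Ioi 0) := by
  rw [gammaM_eq_withDensity_restrict, integrable_withDensity_iff_integrable_smul'
    (by fun_prop) (ae_of_all _ fun _ => ENNReal.ofReal_lt_top)] at hf
  have hΓ := Gamma_pos_of_pos ha
  refine IntegrableOn.congr_fun (hf.const_mul (Gamma a)) (fun y hy => ?_) measurableSet_Ioi
  have := rpow_pos_of_pos (show (0:ℝ) < y from hy) (a - 1)
  rw [smul_eq_mul, ENNReal.toReal_ofReal (by positivity)]
  field_simp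

theorem hasDerivAt_exp_neg_mul_rpow (a : ℝ) {y : ℝ} (hy : 0 < y) :
    HasDerivAt (fun y => exp (-y) * y ^ a) (exp (-y) * y ^ (a - 1) * (a - y)) y := by
  have hexp : HasDerivAt (fun y => exp (-y)) (-exp (-y)) y := by
    simpa using (hasDerivAt_neg y).exp
  refine (hexp.mul (hasDerivAt_rpow_const (Or.inl hy.ne'))).congr_deriv ?_
  rw [rpow_sub_one hy.ne']
  field_simp
  ring

theorem hasDerivAt_laguerre_flux (a : ℝ) {v : ℝ → ℝ} {y : ℝ} (hy : 0 < y)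
    (hv : HasDerivAt (deriv v) (deriv (deriv v) y) y) :
    HasDerivAt (fun y => exp (-y) * y ^ a * deriv v y)
      (-(exp (-y) * y ^ (a - 1) * lagD a v y)) y := by
  refine ((hasDerivAt_exp_neg_mul_rpow a hy).mul hv).congr_deriv ?_
  rw [lagD, rpow_sub_one hy.ne']
  field_simp
  ring

noncomputable def laguerreWronskian (a : ℝ) (v w : ℝ → ℝ) (y : ℝ) : ℝ :=
  exp (-y) * y ^ a * (deriv v y * w y - v y * deriv w y)

theorem hasDerivAt_laguerreWronskian (a : ℝ) {v w : ℝ → ℝ} {y : ℝ} (hy : 0 < y)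
    (hv : HasDerivAt v (deriv v y) y) (hv' : HasDerivAt (deriv v) (deriv (deriv v) y) y)
    (hw : HasDerivAt w (deriv w y) y) (hw' : HasDerivAt (deriv w) (deriv (deriv w) y) y) :
    HasDerivAt (laguerreWronskian a v w)
      (exp (-y) * y ^ (a - 1) * (v y * lagD a w y - lagD a v y * w y)) y := by
  have hsplit : laguerreWronskian a v w =
      fun y => exp (-y) * y ^ a * deriv v y * w y - v y * (exp (-y) * y ^ a * deriv w y) := by
    funext y
    rw [laguerreWronskian]
    ring
  rw [hsplit]
  refine (((hasDerivAt_laguerre_flux a hy hv').mul hw).sub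
    (hv.mul (hasDerivAt_laguerre_flux a hy hw'))).congr_deriv ?_
  ring

/-- If `v, w` are C² on `(0,∞)`, `w` is an eigenfunction `Dw = s·w` on `(0,∞)`,
`(Dv)·w` and `v·w` are `γ_a`-integrable, and the boundary term
`e^{-y} y^a (v' w - v w')` vanishes at `0⁺` and at `∞`, then
`∫ (Dv) w dγ_a = s ∫ v w dγ_a`. -/
theorem lagD_eigen_integration_by_parts (a s : ℝ) (ha : 0 < a) (v w : ℝ → ℝ)
    (hv : ContDiffOn ℝ 2 v (Set.Ioi 0)) (hw : ContDiffOn ℝ 2 w (Set.Ioi 0))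
    (heig : ∀ y > (0 : ℝ), lagD a w y = s * w y)
    (hint1 : Integrable (fun y => lagD a v y * w y) (gammaM a))
    (hint2 : Integrable (fun y => v y * w y) (gammaM a))
    (hb0 : Tendsto (fun y => Real.exp (-y) * y ^ a * (deriv v y * w y - v y * deriv w y))
      (𝓝[>] 0) (𝓝 0))
    (hbi : Tendsto (fun y => Real.exp (-y) * y ^ a * (deriv v y * w y - v y * deriv w y))
      atTop (𝓝 0)) :
    ∫ y, lagD a v y * w y ∂(gammaM a) = s * ∫ y, v y * w y ∂(gammaM a) := by
  have hderiv : ∀ y ∈ Ioi (0 : ℝ), HasDerivAt (laguerreWronskian a v w)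
      (s * (exp (-y) * y ^ (a - 1) * (v y * w y))
        - exp (-y) * y ^ (a - 1) * (lagD a v y * w y)) y := fun y hy => by
    have := hasDerivAt_laguerreWronskian a hy
      ((hv.of_le (by norm_num)).hasDerivAt_of_isOpen isOpen_Ioi hy)
      (hv.hasDerivAt_deriv_of_isOpen isOpen_Ioi hy)
      ((hw.of_le (by norm_num)).hasDerivAt_of_isOpen isOpen_Ioi hy)
      (hw.hasDerivAt_deriv_of_isOpen isOpen_Ioi hy)
    rw [heig y hy] at this
    exact this.congr_deriv (by ring)
  have hint1' := hint1.integrableOn_gammaWeight_mul ha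
  have hint2' := hint2.integrableOn_gammaWeight_mul ha
  have hFTC := integral_Ioi_of_hasDerivAt_of_tendsto_nhdsGT hderiv
    ((hint2'.const_mul s).sub hint1') hb0 hbi
  rw [integral_sub (hint2'.const_mul s) hint1', integral_const_mul, sub_self, sub_eq_zero] at hFTC
  rw [integral_gammaM ha (fun y => lagD a v y * w y), integral_gammaM ha (fun y => v y * w y),
    ← hFTC, mul_left_comm]
end

section
/- Let X be a real Hilbert space, ι a countable index set, (u_s)_{s∈ι} a family in X, and (σ_s)_{s∈ι} a family of positive reals. Let 0 < p < 2, set q := 2p/(2-p), and let M > 0 satisfy Σ_{s∈ι} (σ_s ‖u_s‖_X)² ≤ M and Σ_{s∈ι} σ_s^{-q} ≤ M. Then for every natural number n ≥ 1 there exists a finite subset Λ ⊆ ι with |Λ| ≤ n such that (Σ_{s∉Λ} ‖u_s‖_X²)^{1/2} ≤ 2^{1/p - 1/2} M^{1/p} n^{-(1/p - 1/2)}. -/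
/-- Abstract coefficient form of the convergence rate for truncations of an orthogonal
expansion: weighted ℓ₂-summability of the coefficients `u_s` with weights `σ_s`, together
with `ℓ_q`-control of `σ⁻¹` (`q = 2p/(2-p)`), yields for each `n ≥ 1` a set `Λ` of at most
`n` indices with tail `(Σ_{s∉Λ} ‖u_s‖²)^{1/2} ≤ 2^{1/p-1/2} M^{1/p} n^{-(1/p-1/2)}`. -/
theorem truncation_rate_of_weighted_summability
    {X : Type*} [NormedAddCommGroup X] [InnerProductSpace ℝ X] [CompleteSpace X]
    {ι : Type*} [Countable ι] (u : ι → X) (σ : ι → ℝ) (hσ : ∀ s, 0 < σ s)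
    (p M : ℝ) (hp0 : 0 < p) (hp2 : p < 2) (hM : 0 < M)
    (h1 : Summable fun s => (σ s * ‖u s‖) ^ 2)
    (h1' : ∑' s, (σ s * ‖u s‖) ^ 2 ≤ M)
    (h2 : Summable fun s => σ s ^ (-(2 * p / (2 - p))))
    (h2' : ∑' s, σ s ^ (-(2 * p / (2 - p))) ≤ M) :
    ∀ n : ℕ, 1 ≤ n → ∃ Λ : Finset ι, Λ.card ≤ n ∧
      (∑' s : {s : ι // s ∉ Λ}, ‖u s.1‖ ^ 2) ^ ((1 : ℝ) / 2) ≤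
        2 ^ (1 / p - 1 / 2) * M ^ (1 / p) * (n : ℝ) ^ (-(1 / p - 1 / 2)) := by
  intro n hn
  have h2p : (0:ℝ) < 2 - p := by linarith
  set q : ℝ := 2 * p / (2 - p) with hqdef
  have hq0 : (0:ℝ) < q := div_pos (by linarith) h2p
  have hn0 : (0:ℝ) < n := by exact_mod_cast Nat.lt_of_lt_of_le Nat.zero_lt_one hn
  have hε : (0:ℝ) < M / n := div_pos hM hn0
  have hcof : ∀ᶠ s in Filter.cofinite, σ s ^ (-q) < M / n :=
    h2.tendsto_cofinite_zero.eventually (gt_mem_nhds hε)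
  have hfin : {s : ι | ¬ σ s ^ (-q) < M / n}.Finite := Filter.eventually_cofinite.mp hcof
  refine ⟨hfin.toFinset, ?_, ?_⟩
  · -- card bound
    have hle : (hfin.toFinset.card : ℝ) * (M / n) ≤ ∑ s ∈ hfin.toFinset, σ s ^ (-q) := by
      have := Finset.card_nsmul_le_sum hfin.toFinset (fun s => σ s ^ (-q)) (M / n)
        (fun s hs => le_of_not_gt (hfin.mem_toFinset.mp hs))
      simpa [nsmul_eq_mul] using this
    have hsum : ∑ s ∈ hfin.toFinset, σ s ^ (-q) ≤ M :=
      le_trans (Summable.sum_le_tsum hfin.toFinset (fun s _ => Real.rpow_nonneg (hσ s).le _) h2) h2'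
    have h3 : (hfin.toFinset.card : ℝ) * (M / n) ≤ M := le_trans hle hsum
    have hMe : M = (n:ℝ) * (M / n) := by field_simp
    have h4 : (hfin.toFinset.card : ℝ) ≤ n := by nlinarith [h3, hε]
    exact_mod_cast h4
  · set C : ℝ := (M / n) ^ (2 / q) with hC
    have hC0 : (0:ℝ) ≤ C := Real.rpow_nonneg hε.le _
    have key : ∀ s : {s : ι // s ∉ hfin.toFinset}, ‖u s.1‖ ^ 2 ≤ C * (σ s.1 * ‖u s.1‖) ^ 2 := by
      rintro ⟨s, hs⟩
      have h5 : σ s ^ (-q) ≤ M / n := by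
        by_contra hcon
        exact hs (hfin.mem_toFinset.mpr (fun h => hcon (le_of_lt h)))
      have h6 : σ s ^ (-(2:ℝ)) ≤ C := by
        calc σ s ^ (-(2:ℝ)) = (σ s ^ (-q)) ^ (2/q) := by
              rw [← Real.rpow_mul (hσ s).le]
              congr 1
              field_simp
          _ ≤ (M/n) ^ (2/q) :=
              Real.rpow_le_rpow (Real.rpow_nonneg (hσ s).le _) h5 (by positivity)
      have hσ2 : σ s ^ (-(2:ℝ)) = (σ s ^ 2)⁻¹ := by
        rw [show (-(2:ℝ)) = ((-2 : ℤ) : ℝ) by norm_num, Real.rpow_intCast, zpow_neg]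
        norm_cast
      have h7 : ‖u s‖ ^ 2 = σ s ^ (-(2:ℝ)) * (σ s * ‖u s‖) ^ 2 := by
        rw [hσ2, mul_pow, inv_mul_cancel_left₀ (pow_pos (hσ s) 2).ne']
      rw [h7]
      exact mul_le_mul_of_nonneg_right h6 (sq_nonneg _)
    have hsub : Summable fun s : {s : ι // s ∉ hfin.toFinset} => (σ s.1 * ‖u s.1‖) ^ 2 :=
      h1.subtype _
    have hsum2 : Summable fun s : {s : ι // s ∉ hfin.toFinset} => ‖u s.1‖ ^ 2 :=
      Summable.of_nonneg_of_le (fun s => sq_nonneg _) key (hsub.mul_left C)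
    have hsuble : (∑' s : {s : ι // s ∉ hfin.toFinset}, (σ s.1 * ‖u s.1‖) ^ 2)
        ≤ ∑' s, (σ s * ‖u s‖) ^ 2 :=
      Summable.tsum_le_tsum_of_inj Subtype.val Subtype.val_injective
        (fun a _ => sq_nonneg _) (fun s => le_rfl) hsub h1
    have hT : (∑' s : {s : ι // s ∉ hfin.toFinset}, ‖u s.1‖ ^ 2) ≤ C * M := by
      calc (∑' s : {s : ι // s ∉ hfin.toFinset}, ‖u s.1‖ ^ 2)
          ≤ ∑' s : {s : ι // s ∉ hfin.toFinset}, C * (σ s.1 * ‖u s.1‖) ^ 2 :=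
            Summable.tsum_le_tsum key hsum2 (hsub.mul_left C)
        _ = C * ∑' s : {s : ι // s ∉ hfin.toFinset}, (σ s.1 * ‖u s.1‖) ^ 2 := tsum_mul_left
        _ ≤ C * M := mul_le_mul_of_nonneg_left (le_trans hsuble h1') hC0
    have hT0 : (0:ℝ) ≤ ∑' s : {s : ι // s ∉ hfin.toFinset}, ‖u s.1‖ ^ 2 :=
      tsum_nonneg fun s => sq_nonneg _
    have step : (∑' s : {s : ι // s ∉ hfin.toFinset}, ‖u s.1‖ ^ 2) ^ ((1:ℝ)/2)
        ≤ (C * M) ^ ((1:ℝ)/2) := Real.rpow_le_rpow hT0 hT (by norm_num)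
    have hqinv : 1 / q = 1 / p - 1 / 2 := by
      rw [hqdef, one_div_div]
      rw [div_sub_div _ _ hp0.ne' (two_ne_zero), eq_div_iff (by positivity)]
      field_simp
    have hCM : (C * M) ^ ((1:ℝ)/2) = M ^ (1/p) * (n:ℝ) ^ (-(1/p - 1/2)) := by
      rw [Real.mul_rpow hC0 hM.le, hC, ← Real.rpow_mul hε.le,
        Real.div_rpow hM.le hn0.le, Real.rpow_neg hn0.le, div_eq_mul_inv]
      have he : 2 / q * (1/2) = 1/q := by
        field_simp
      rw [he, hqinv]
      have : M ^ (1/p - 1/2) * ((n:ℝ) ^ (1/p - 1/2))⁻¹ * M ^ ((1:ℝ)/2)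
          = (M ^ (1/p - 1/2) * M ^ ((1:ℝ)/2)) * ((n:ℝ) ^ (1/p - 1/2))⁻¹ := by ring
      rw [this, ← Real.rpow_add hM]
      norm_num
    have ha : (0:ℝ) ≤ 1/p - 1/2 := by rw [← hqinv]; positivity
    have h2pow : (1:ℝ) ≤ 2 ^ (1/p - 1/2) := by
      calc (1:ℝ) = 2 ^ (0:ℝ) := (Real.rpow_zero 2).symm
        _ ≤ 2 ^ (1/p - 1/2) := Real.rpow_le_rpow_of_exponent_le one_le_two ha
    calc (∑' s : {s : ι // s ∉ hfin.toFinset}, ‖u s.1‖ ^ 2) ^ ((1:ℝ)/2)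
        ≤ M ^ (1/p) * (n:ℝ) ^ (-(1/p - 1/2)) := by rw [← hCM]; exact step
      _ ≤ 2 ^ (1/p - 1/2) * M ^ (1/p) * (n:ℝ) ^ (-(1/p - 1/2)) := by
          rw [mul_assoc]
          exact le_mul_of_one_le_left (by positivity) h2pow
end

section
/- Let ι be a countable index set, (a_s)_{s∈ι} and (p_s)_{s∈ι} families of non-negative reals, (σ_s)_{s∈ι} a family of positive reals, 0 < q < 2, and M > 0 such that Σ_{s∈ι} (σ_s a_s)² ≤ M and Σ_{s∈ι} p_s² σ_s^{-q} ≤ M. Then for every ξ ≥ 1, Σ_{s : σ_s^q > ξ} a_s p_s ≤ M ξ^{-(1/q - 1/2)}. -/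
/-- Tail estimate: if `Σ (σ_s a_s)² ≤ M` and `Σ p_s² σ_s^{-q} ≤ M` with `0 < q < 2`, then
for every `ξ ≥ 1` the tail sum over `{s : σ_s^q > ξ}` of `a_s p_s` is at most
`M ξ^{-(1/q - 1/2)}`. -/
theorem tail_sum_le_of_weighted_summability
    {ι : Type*} [Countable ι] (a p σ : ι → ℝ)
    (ha : ∀ s, 0 ≤ a s) (hp : ∀ s, 0 ≤ p s) (hσ : ∀ s, 0 < σ s)
    (q M : ℝ) (hq0 : 0 < q) (hq2 : q < 2) (hM : 0 < M)
    (h1 : Summable fun s => (σ s * a s) ^ 2)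
    (h1' : ∑' s, (σ s * a s) ^ 2 ≤ M)
    (h2 : Summable fun s => p s ^ 2 * σ s ^ (-q))
    (h2' : ∑' s, p s ^ 2 * σ s ^ (-q) ≤ M) :
    ∀ ξ : ℝ, 1 ≤ ξ →
      Summable (fun s : {s : ι // ξ < σ s ^ q} => a s.1 * p s.1) ∧
      ∑' s : {s : ι // ξ < σ s ^ q}, a s.1 * p s.1 ≤ M * ξ ^ (-(1 / q - 1 / 2)) := by
  intro ξ hξ
  have hξ0 : (0:ℝ) < ξ := lt_of_lt_of_le one_pos hξ
  have hq0' : q ≠ 0 := ne_of_gt hq0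
  set c : ℝ := ξ ^ (-((2 - q) / q)) with hc
  have hc0 : 0 < c := Real.rpow_pos_of_pos hξ0 _
  -- pointwise bound on the tail
  have key : ∀ s : {s : ι // ξ < σ s ^ q},
      (p s.1 / σ s.1) ^ 2 ≤ p s.1 ^ 2 * σ s.1 ^ (-q) * c := by
    rintro ⟨s, hs⟩
    have hσs := hσ s
    have h2q : (0:ℝ) ≤ (2 - q) / q := le_of_lt (div_pos (by linarith) hq0)
    have hbase : ξ ^ ((2 - q) / q) ≤ σ s ^ (2 - q) := by
      have h := Real.rpow_le_rpow hξ0.le hs.le h2q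
      rwa [← Real.rpow_mul hσs.le, show q * ((2 - q) / q) = 2 - q by field_simp] at h
    have hinv : (σ s) ^ (q - 2) ≤ c := by
      rw [show q - 2 = -(2 - q) by ring, Real.rpow_neg hσs.le, hc, Real.rpow_neg hξ0.le]
      exact inv_anti₀ (Real.rpow_pos_of_pos hξ0 _) hbase
    calc (p s / σ s) ^ 2 = p s ^ 2 * σ s ^ (-(2:ℝ)) := by
          rw [div_pow, Real.rpow_neg hσs.le, div_eq_mul_inv,
            show ((2:ℝ)) = ((2:ℕ):ℝ) by norm_num, Real.rpow_natCast]
      _ = p s ^ 2 * (σ s ^ (-q) * σ s ^ (q - 2)) := by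
          rw [← Real.rpow_add hσs]; ring_nf
      _ ≤ p s ^ 2 * (σ s ^ (-q) * c) := by
          have : σ s ^ (-q) * σ s ^ (q - 2) ≤ σ s ^ (-q) * c :=
            mul_le_mul_of_nonneg_left hinv (Real.rpow_nonneg hσs.le _)
          exact mul_le_mul_of_nonneg_left this (sq_nonneg _)
      _ = p s ^ 2 * σ s ^ (-q) * c := by ring
  -- summability on the subtype
  have hf2 : Summable fun s : {s : ι // ξ < σ s ^ q} => (σ s.1 * a s.1) ^ 2 :=
    h1.subtype _
  have hbound : Summable fun s : {s : ι // ξ < σ s ^ q} =>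
      p s.1 ^ 2 * σ s.1 ^ (-q) * c := (h2.subtype _).mul_right c
  have hg2 : Summable fun s : {s : ι // ξ < σ s ^ q} => (p s.1 / σ s.1) ^ 2 :=
    Summable.of_nonneg_of_le (fun s => sq_nonneg _) key hbound
  have hprod : ∀ s : ι, a s * p s = (σ s * a s) * (p s / σ s) := by
    intro s
    have h := (hσ s).ne'
    field_simp
  have hsum : Summable (fun s : {s : ι // ξ < σ s ^ q} => a s.1 * p s.1) := by
    apply Summable.of_nonneg_of_le (fun s => mul_nonneg (ha _) (hp _))
      (fun s => ?_) ((hf2.add hg2).div_const 2)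
    rw [hprod]
    have := two_mul_le_add_sq (σ s.1 * a s.1) (p s.1 / σ s.1)
    nlinarith [this]
  refine ⟨hsum, ?_⟩
  -- tsum bounds for the two factors
  set A := ∑' s : {s : ι // ξ < σ s ^ q}, (σ s.1 * a s.1) ^ 2 with hA
  set B := ∑' s : {s : ι // ξ < σ s ^ q}, (p s.1 / σ s.1) ^ 2 with hB
  have hA0 : 0 ≤ A := tsum_nonneg fun s => sq_nonneg _
  have hB0 : 0 ≤ B := tsum_nonneg fun s => sq_nonneg _
  have hAM : A ≤ M := by
    refine le_trans (Summable.tsum_subtype_le (fun s : ι => (σ s * a s) ^ 2) _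
      (fun s => sq_nonneg _) h1) h1'
  have hBM : B ≤ M * c := by
    have hle : B ≤ ∑' s : {s : ι // ξ < σ s ^ q}, p s.1 ^ 2 * σ s.1 ^ (-q) * c :=
      Summable.tsum_le_tsum key hg2 hbound
    have : ∑' s : {s : ι // ξ < σ s ^ q}, p s.1 ^ 2 * σ s.1 ^ (-q) * c
        = (∑' s : {s : ι // ξ < σ s ^ q}, p s.1 ^ 2 * σ s.1 ^ (-q)) * c :=
      tsum_mul_right
    have hsub : ∑' s : {s : ι // ξ < σ s ^ q}, p s.1 ^ 2 * σ s.1 ^ (-q) ≤ M :=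
      le_trans (Summable.tsum_subtype_le (fun s : ι => p s ^ 2 * σ s ^ (-q)) _
        (fun s => mul_nonneg (sq_nonneg _) (Real.rpow_nonneg (hσ s).le _)) h2) h2'
    calc B ≤ _ := hle
      _ = _ * c := this
      _ ≤ M * c := mul_le_mul_of_nonneg_right hsub hc0.le
  -- Cauchy–Schwarz
  have CS : ∑' s : {s : ι // ξ < σ s ^ q}, a s.1 * p s.1
      ≤ Real.sqrt A * Real.sqrt B := by
    refine Summable.tsum_le_of_sum_le hsum fun F => ?_
    calc ∑ s ∈ F, a s.1 * p s.1
        = ∑ s ∈ F, (σ s.1 * a s.1) * (p s.1 / σ s.1) :=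
          Finset.sum_congr rfl fun s _ => hprod s.1
      _ ≤ Real.sqrt (∑ s ∈ F, (σ s.1 * a s.1) ^ 2) *
          Real.sqrt (∑ s ∈ F, (p s.1 / σ s.1) ^ 2) :=
          Real.sum_mul_le_sqrt_mul_sqrt _ _ _
      _ ≤ Real.sqrt A * Real.sqrt B := by
          gcongr
          · exact Summable.sum_le_tsum F (fun s _ => sq_nonneg _) hf2
          · exact Summable.sum_le_tsum F (fun s _ => sq_nonneg _) hg2
  have hfinal : Real.sqrt A * Real.sqrt B ≤ M * ξ ^ (-(1 / q - 1 / 2)) := by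
    have h1'' : Real.sqrt A ≤ Real.sqrt M := Real.sqrt_le_sqrt hAM
    have h2'' : Real.sqrt B ≤ Real.sqrt (M * c) := Real.sqrt_le_sqrt hBM
    have hmul : Real.sqrt A * Real.sqrt B ≤ Real.sqrt M * Real.sqrt (M * c) :=
      mul_le_mul h1'' h2'' (Real.sqrt_nonneg _) (Real.sqrt_nonneg _)
    have heq : Real.sqrt M * Real.sqrt (M * c) = M * ξ ^ (-(1 / q - 1 / 2)) := by
      rw [Real.sqrt_mul hM.le, ← mul_assoc, Real.mul_self_sqrt hM.le, hc,
        Real.sqrt_eq_rpow, ← Real.rpow_mul hξ0.le,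
        show -((2 - q) / q) * (1 / 2) = -(1 / q - 1 / 2) by field_simp]
    linarith [hmul, heq.le, heq.ge]
  exact CS.trans hfinal
end

section
/- Let H be a real Hilbert space, ι a countable index set, (x_s)_{s∈ι} a pairwise orthogonal family in H with Σ_s ‖x_s‖² < ∞, and let u := Σ_s x_s (the sum converging unconditionally in H). Let (σ_s)_{s∈ι} be positive reals, (p_s)_{s∈ι} reals with p_s ≥ 1, let 0 < q < 2 and M > 0 be such that Σ_s (σ_s ‖x_s‖)² ≤ M and Σ_s p_s² σ_s^{-q} ≤ M. Let (y_s)_{s∈ι} be any family in H with ‖y_s‖ ≤ p_s ‖x_s‖ for all s. Then for every ξ ≥ 1, the series Σ_{s : σ_s^q > ξ} y_s converges absolutely, and the element v := Σ_{s : σ_s^q ≤ ξ} x_s + Σ_{s : σ_s^q > ξ} y_s satisfies ‖u - v‖ ≤ M^{1/2} ξ^{-1/q} + M ξ^{-(1/q - 1/2)}, hence ‖u - v‖ ≤ (M^{1/2} + M) ξ^{-(1/q - 1/2)}. -/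
open scoped RealInnerProductSpace

/-!
Since the terms with `σ_s^q ≤ ξ` are reproduced exactly, `u - v` is the tail sum
`∑_{σ_s^q > ξ} (x_s - y_s)`. On the tail `σ_s⁻¹ ≤ ξ^{-1/q}`, so by Pythagoras the `x`-part has
norm at most `ξ^{-1/q} M^{1/2}`. For the `y`-part write
`p_s ‖x_s‖ = (p_s σ_s^{-q/2}) · σ_s^{q/2-1} · (σ_s ‖x_s‖)`; since `q ≤ 2` the middle factor is at
most `ε = ξ^{-(1/q-1/2)}` on the tail, and AM-GM bounds the term by
`ε/2 · (p_s² σ_s^{-q} + (σ_s ‖x_s‖)²)`, whose sum is at most `ε M`.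
-/

theorem HasSum.tsum_subtype_le_add_tsum_subtype_lt {ι E α : Type*} [NormedAddCommGroup E]
    [CompleteSpace E] [LinearOrder α] {f : ι → E} {a : E} (hf : HasSum f a) (g : ι → α) (c : α) :
    (∑' s : {s // g s ≤ c}, f s) + ∑' s : {s // c < g s}, f s = a := by
  rw [← hf.tsum_eq, ← hf.summable.tsum_subtype_add_tsum_subtype_compl {s | g s ≤ c}]
  congr 1
  exact tsum_congr_set_coe f (Set.ext fun _ => not_le.symm)

section RpowBounds

variable {σ ξ q : ℝ}

theorem rpow_mul_le_rpow_of_lt_rpow (hσ : 0 ≤ σ) (hξ : 0 < ξ) (h : ξ < σ ^ q) {b : ℝ}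
    (hb : b ≤ 0) : σ ^ (q * b) ≤ ξ ^ b := by
  rw [Real.rpow_mul hσ]
  exact Real.rpow_le_rpow_of_nonpos hξ h.le hb

theorem le_rpow_neg_inv_mul_of_lt_rpow (hσ : 0 < σ) (hξ : 0 < ξ) (hq : 0 < q) (h : ξ < σ ^ q)
    {t : ℝ} (ht : 0 ≤ t) : t ≤ ξ ^ (-(1 / q)) * (σ * t) := by
  have hdecay : σ ^ (-1 : ℝ) ≤ ξ ^ (-(1 / q)) := by
    simpa [hq.ne'] using rpow_mul_le_rpow_of_lt_rpow hσ.le hξ h (b := -(1 / q)) (by simp [hq.le])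
  calc t = σ ^ (-1 : ℝ) * (σ * t) := by
        rw [← mul_assoc, Real.rpow_neg_one, inv_mul_cancel₀ hσ.ne', one_mul]
    _ ≤ ξ ^ (-(1 / q)) * (σ * t) := by gcongr

theorem mul_le_rpow_mul_add_of_lt_rpow (hσ : 0 < σ) (hξ : 0 < ξ) (hq : 0 < q) (hq2 : q ≤ 2)
    (h : ξ < σ ^ q) (p t : ℝ) :
    p * t ≤ ξ ^ (-(1 / q - 1 / 2)) / 2 * (p ^ 2 * σ ^ (-q) + (σ * t) ^ 2) := by
  set ε := ξ ^ (-(1 / q - 1 / 2))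
  set a := p * σ ^ (-(q / 2))
  set r := σ ^ (q / 2 - 1)
  have hr : r ≤ ε := by
    convert rpow_mul_le_rpow_of_lt_rpow hσ.le hξ h (b := -(1 / q - 1 / 2)) ?_ using 2
    · field_simp; ring
    · have : 1 / 2 ≤ 1 / q := by rw [div_le_div_iff₀ two_pos hq]; linarith
      linarith
  have hr0 : 0 ≤ r := Real.rpow_nonneg hσ.le _
  have hsplit : p * t = a * r * (σ * t) := by
    have : σ ^ (-(q / 2)) * σ ^ (q / 2 - 1) * σ = 1 := by
      rw [← Real.rpow_add hσ, ← Real.rpow_add_one hσ.ne']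
      ring_nf; exact Real.rpow_zero σ
    linear_combination (-(p * t)) * this
  have ha : a ^ 2 = p ^ 2 * σ ^ (-q) := by
    rw [mul_pow, ← Real.rpow_mul_natCast hσ.le]; norm_num
  rw [hsplit, ← ha]
  nlinarith [mul_nonneg (sub_nonneg.2 hr) (add_nonneg (sq_nonneg a) (sq_nonneg (σ * t))),
    mul_nonneg hr0 (sq_nonneg (a - σ * t))]

end RpowBounds

section Orthogonal

variable {H ι : Type*} [NormedAddCommGroup H] [InnerProductSpace ℝ H] {x : ι → H}

theorem norm_sum_sq_eq_sum_norm_sq_of_pairwise_inner_eq_zero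
    (horth : Pairwise fun s t => ⟪x s, x t⟫ = 0) (F : Finset ι) :
    ‖∑ s ∈ F, x s‖ ^ 2 = ∑ s ∈ F, ‖x s‖ ^ 2 := by
  rw [← real_inner_self_eq_norm_sq, sum_inner]
  refine Finset.sum_congr rfl fun s hs => ?_
  rw [inner_sum, Finset.sum_eq_single_of_mem s hs fun t _ hts => horth hts.symm,
    real_inner_self_eq_norm_sq]

theorem hasSum_norm_sq_of_pairwise_inner_eq_zero
    (horth : Pairwise fun s t => ⟪x s, x t⟫ = 0) (hx : Summable x) :
    HasSum (fun s => ‖x s‖ ^ 2) (‖∑' s, x s‖ ^ 2) := by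
  have := (Filter.Tendsto.norm hx.hasSum).pow 2
  simp only [norm_sum_sq_eq_sum_norm_sq_of_pairwise_inner_eq_zero horth] at this
  exact this

theorem norm_tsum_le_of_pairwise_inner_eq_zero (horth : Pairwise fun s t => ⟪x s, x t⟫ = 0)
    (hx : Summable x) {w : ι → ℝ} (hw : Summable fun s => w s ^ 2) {c : ℝ} (hc : 0 ≤ c)
    (hxw : ∀ s, ‖x s‖ ≤ c * w s) : ‖∑' s, x s‖ ≤ c * √(∑' s, w s ^ 2) := by
  rw [← Real.sqrt_sq hc, ← Real.sqrt_mul (sq_nonneg c), ← tsum_mul_left]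
  refine Real.le_sqrt_of_sq_le ?_
  have hsum := hasSum_norm_sq_of_pairwise_inner_eq_zero horth hx
  rw [← hsum.tsum_eq]
  refine hsum.summable.tsum_le_tsum (fun s => ?_) (hw.mul_left _)
  rw [← mul_pow]
  exact pow_le_pow_left₀ (norm_nonneg _) (hxw s) 2

end Orthogonal

section TailSums

variable {H ι : Type*} [NormedAddCommGroup H] {x : ι → H} {σ : ι → ℝ} {q ξ M : ℝ}

theorem norm_tsum_tail_le [InnerProductSpace ℝ H] [CompleteSpace H]
    (horth : Pairwise fun s t => ⟪x s, x t⟫ = 0) (hx : Summable x)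
    (hσ : ∀ s, 0 < σ s) (hq : 0 < q) (hξ : 0 < ξ) (h1 : Summable fun s => (σ s * ‖x s‖) ^ 2)
    (h1' : ∑' s, (σ s * ‖x s‖) ^ 2 ≤ M) :
    ‖∑' s : {s // ξ < σ s ^ q}, x s‖ ≤ M ^ ((1 : ℝ) / 2) * ξ ^ (-(1 / q)) := calc
  _ ≤ ξ ^ (-(1 / q)) * √(∑' s : {s // ξ < σ s ^ q}, (σ s * ‖x s‖) ^ 2) :=
    norm_tsum_le_of_pairwise_inner_eq_zero (horth.comp_of_injective Subtype.val_injective)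
      (hx.subtype _) (h1.subtype _) (Real.rpow_nonneg hξ.le _)
      fun s => le_rpow_neg_inv_mul_of_lt_rpow (hσ s.1) hξ hq s.2 (norm_nonneg _)
  _ ≤ ξ ^ (-(1 / q)) * √M := by
    gcongr
    exact (h1.tsum_subtype_le _ {s | ξ < σ s ^ q} fun s => sq_nonneg _).trans h1'
  _ = M ^ ((1 : ℝ) / 2) * ξ ^ (-(1 / q)) := by rw [Real.sqrt_eq_rpow, mul_comm]

theorem summable_norm_tail_and_tsum_le {p : ι → ℝ} {y : ι → H} (hσ : ∀ s, 0 < σ s)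
    (hq0 : 0 < q) (hq2 : q ≤ 2) (hξ : 0 < ξ) (h1 : Summable fun s => (σ s * ‖x s‖) ^ 2)
    (h1' : ∑' s, (σ s * ‖x s‖) ^ 2 ≤ M) (h2 : Summable fun s => p s ^ 2 * σ s ^ (-q))
    (h2' : ∑' s, p s ^ 2 * σ s ^ (-q) ≤ M) (hy : ∀ s, ‖y s‖ ≤ p s * ‖x s‖) :
    Summable (fun s : {s // ξ < σ s ^ q} => ‖y s‖) ∧
      ∑' s : {s // ξ < σ s ^ q}, ‖y s‖ ≤ M * ξ ^ (-(1 / q - 1 / 2)) := by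
  set T := {s | ξ < σ s ^ q}
  set ε := ξ ^ (-(1 / q - 1 / 2))
  have hyT : ∀ s : T, ‖y s‖ ≤ ε / 2 * (p s ^ 2 * σ s ^ (-q) + (σ s * ‖x s‖) ^ 2) := fun s =>
    (hy s.1).trans (mul_le_rpow_mul_add_of_lt_rpow (hσ s.1) hξ hq0 hq2 s.2 _ _)
  have hsum : Summable fun s : T => ε / 2 * (p s ^ 2 * σ s ^ (-q) + (σ s * ‖x s‖) ^ 2) :=
    ((h2.subtype T).add (h1.subtype T)).mul_left _
  have hYs : Summable fun s : T => ‖y s‖ := hsum.of_nonneg_of_le (fun _ => norm_nonneg _) hyT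
  refine ⟨hYs, ?_⟩
  calc ∑' s : T, ‖y s‖
    _ ≤ ∑' s : T, ε / 2 * (p s ^ 2 * σ s ^ (-q) + (σ s * ‖x s‖) ^ 2) :=
      hYs.tsum_le_tsum hyT hsum
    _ = ε / 2 * (∑' s : T, p s ^ 2 * σ s ^ (-q) + ∑' s : T, (σ s * ‖x s‖) ^ 2) := by
      rw [tsum_mul_left]
      exact congrArg _ ((h2.subtype T).tsum_add (h1.subtype T))
    _ ≤ ε / 2 * (M + M) := by
      gcongr
      · exact (h2.tsum_subtype_le _ T fun s => by positivity [hσ s]).trans h2'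
      · exact (h1.tsum_subtype_le _ T fun s => sq_nonneg _).trans h1'
    _ = M * ε := by ring

end TailSums

theorem interpolation_error_bound_general
    {H : Type*} [NormedAddCommGroup H] [InnerProductSpace ℝ H] [CompleteSpace H]
    {ι : Type*} (x : ι → H) (u : H)
    (horth : Pairwise fun s t => ⟪x s, x t⟫ = (0 : ℝ))
    (hu : HasSum x u)
    (σ : ι → ℝ) (hσ : ∀ s, 0 < σ s) (p : ι → ℝ)
    (q M : ℝ) (hq0 : 0 < q) (hq2 : q < 2)
    (h1 : Summable fun s => (σ s * ‖x s‖) ^ 2)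
    (h1' : ∑' s, (σ s * ‖x s‖) ^ 2 ≤ M)
    (h2 : Summable fun s => p s ^ 2 * σ s ^ (-q))
    (h2' : ∑' s, p s ^ 2 * σ s ^ (-q) ≤ M)
    (y : ι → H) (hy : ∀ s, ‖y s‖ ≤ p s * ‖x s‖) :
    ∀ ξ : ℝ, 1 ≤ ξ →
      Summable (fun s : {s : ι // ξ < σ s ^ q} => ‖y s.1‖) ∧
      ‖u - ((∑' s : {s : ι // σ s ^ q ≤ ξ}, x s.1) +
            ∑' s : {s : ι // ξ < σ s ^ q}, y s.1)‖ ≤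
        M ^ ((1 : ℝ) / 2) * ξ ^ (-(1 / q)) + M * ξ ^ (-(1 / q - 1 / 2)) ∧
      ‖u - ((∑' s : {s : ι // σ s ^ q ≤ ξ}, x s.1) +
            ∑' s : {s : ι // ξ < σ s ^ q}, y s.1)‖ ≤
        (M ^ ((1 : ℝ) / 2) + M) * ξ ^ (-(1 / q - 1 / 2)) := by
  intro ξ hξ
  have hξ0 : 0 < ξ := one_pos.trans_le hξ
  obtain ⟨hYs, hY⟩ := summable_norm_tail_and_tsum_le hσ hq0 hq2.le hξ0 h1 h1' h2 h2' hy
  have hbound : ‖u - ((∑' s : {s : ι // σ s ^ q ≤ ξ}, x s.1) +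
      ∑' s : {s : ι // ξ < σ s ^ q}, y s.1)‖ ≤
        M ^ ((1 : ℝ) / 2) * ξ ^ (-(1 / q)) + M * ξ ^ (-(1 / q - 1 / 2)) := by
    rw [← hu.tsum_subtype_le_add_tsum_subtype_lt (fun s => σ s ^ q) ξ, add_sub_add_left_eq_sub]
    exact (norm_sub_le _ _).trans <| add_le_add
      (norm_tsum_tail_le horth hu.summable hσ hq0 hξ0 h1 h1')
      ((norm_tsum_le_tsum_norm hYs).trans hY)
  refine ⟨hYs, hbound, hbound.trans ?_⟩
  rw [add_mul, ← Real.sqrt_eq_rpow]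
  gcongr
  linarith

/-- Abstract error bound for sparse-grid interpolation of an orthogonal expansion:
`u = Σ_s x_s` with `(x_s)` pairwise orthogonal; on the index set `{σ_s^q ≤ ξ}` the terms
are reproduced exactly, and each remaining term is replaced by `y_s` with
`‖y_s‖ ≤ p_s ‖x_s‖`. The resulting element `v` satisfies
`‖u - v‖ ≤ M^{1/2} ξ^{-1/q} + M ξ^{-(1/q-1/2)} ≤ (M^{1/2}+M) ξ^{-(1/q-1/2)}`. -/
theorem interpolation_error_bound
    {H : Type*} [NormedAddCommGroup H] [InnerProductSpace ℝ H] [CompleteSpace H]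
    {ι : Type*} [Countable ι] (x : ι → H) (u : H)
    (horth : Pairwise fun s t => ⟪x s, x t⟫ = (0 : ℝ))
    (hx2 : Summable fun s => ‖x s‖ ^ 2)
    (hu : HasSum x u)
    (σ : ι → ℝ) (hσ : ∀ s, 0 < σ s) (p : ι → ℝ) (hp : ∀ s, 1 ≤ p s)
    (q M : ℝ) (hq0 : 0 < q) (hq2 : q < 2) (hM : 0 < M)
    (h1 : Summable fun s => (σ s * ‖x s‖) ^ 2)
    (h1' : ∑' s, (σ s * ‖x s‖) ^ 2 ≤ M)
    (h2 : Summable fun s => p s ^ 2 * σ s ^ (-q))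
    (h2' : ∑' s, p s ^ 2 * σ s ^ (-q) ≤ M)
    (y : ι → H) (hy : ∀ s, ‖y s‖ ≤ p s * ‖x s‖) :
    ∀ ξ : ℝ, 1 ≤ ξ →
      Summable (fun s : {s : ι // ξ < σ s ^ q} => ‖y s.1‖) ∧
      ‖u - ((∑' s : {s : ι // σ s ^ q ≤ ξ}, x s.1) +
            ∑' s : {s : ι // ξ < σ s ^ q}, y s.1)‖ ≤
        M ^ ((1 : ℝ) / 2) * ξ ^ (-(1 / q)) + M * ξ ^ (-(1 / q - 1 / 2)) ∧
      ‖u - ((∑' s : {s : ι // σ s ^ q ≤ ξ}, x s.1) +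
            ∑' s : {s : ι // ξ < σ s ^ q}, y s.1)‖ ≤
        (M ^ ((1 : ℝ) / 2) + M) * ξ ^ (-(1 / q - 1 / 2)) :=
  interpolation_error_bound_general x u horth hu σ hσ p q M hq0 hq2 h1 h1' h2 h2' y hy
end

section
/- Let 0 < p < ∞, θ ≥ 0, λ ≥ 0, c ≥ 0, let r be a positive integer with p(r - θ) > 1, and let ρ = (ρ_j)_{j≥1} be a sequence of positive reals with Σ_j ρ_j^{-p} < ∞. For s ∈ F define p_s := ∏_{j∈J_s} (1 + λ s_j)^θ and β_s := c^{|J_s|} · (∏_{j∈J_s} s_j^{-r}) · Σ_{k∈F : J_k = J_s, k_j ≤ 2r for all j} ∏_{j∈J_s} ρ_j^{-k_j}. Then Σ_{s∈F} (p_s β_s)^p < ∞. -/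
set_option maxHeartbeats 1600000

open Finset

lemma sum_prod_le_prod_sum {ι A : Type*} [DecidableEq ι] (S : Finset ι) (T : ι → Finset ℕ)
    (g : ι → ℕ → ℝ) (hg : ∀ i n, 0 ≤ g i n) (B : Finset A) (v : A → ι → ℕ)
    (hinj : ∀ a ∈ B, ∀ b ∈ B, (∀ i ∈ S, v a i = v b i) → a = b)
    (hmem : ∀ a ∈ B, ∀ i ∈ S, v a i ∈ T i) :
    ∑ a ∈ B, ∏ i ∈ S, g i (v a i) ≤ ∏ i ∈ S, ∑ n ∈ T i, g i n := by
  classical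
  rw [Finset.prod_sum]
  set F : ((a : ι) → a ∈ S → ℕ) → ℝ := fun p => ∏ x ∈ S.attach, g x.1 (p x.1 x.2) with hF
  set Φ : A → ((a : ι) → a ∈ S → ℕ) := fun a i _ => v a i with hΦ
  have key : ∑ a ∈ B, ∏ i ∈ S, g i (v a i) = ∑ p ∈ B.image Φ, F p := by
    rw [Finset.sum_image (fun a ha b hb h => hinj a ha b hb
      (fun i hi => congrFun (congrFun h i) hi))]
    refine Finset.sum_congr rfl fun a _ => ?_
    rw [hF]
    exact (Finset.prod_attach S fun i => g i (v a i)).symm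
  rw [key]
  refine Finset.sum_le_sum_of_subset_of_nonneg ?_ (fun p _ _ => Finset.prod_nonneg fun x _ => hg _ _)
  intro p hp
  rw [Finset.mem_image] at hp
  obtain ⟨a, ha, rfl⟩ := hp
  rw [Finset.mem_pi]
  exact fun i hi => hmem a ha i hi

lemma summable_finsupp_prod (g : ℕ → ℕ → ℝ) (hg : ∀ j n, 0 ≤ g j n) (hg0 : ∀ j, g j 0 = 1)
    (hs : ∀ j, Summable (g j)) (ht : Summable fun j => ∑' n, g j (n + 1)) :
    Summable (fun s : ℕ →₀ ℕ => ∏ j ∈ s.support, g j (s j)) := by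
  classical
  set t : ℕ → ℝ := fun j => ∑' n, g j (n + 1) with htdef
  have htn : ∀ j, 0 ≤ t j := fun j => tsum_nonneg fun n => hg j (n + 1)
  apply summable_of_sum_le (c := Real.exp (∑' j, t j))
    (fun s => Finset.prod_nonneg fun j _ => hg j (s j))
  intro A
  set N : ℕ := (A.sup fun s => s.support.sup id) + 1 with hN
  set M : ℕ := A.sup fun s => s.support.sup s with hM
  have hsupp : ∀ s ∈ A, s.support ⊆ Finset.range N := by
    intro s hsA j hj
    rw [Finset.mem_range, hN, Nat.lt_succ_iff]
    exact le_trans (Finset.le_sup (f := id) hj) (Finset.le_sup (f := fun s => s.support.sup id) hsA)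
  have hval : ∀ s ∈ A, ∀ j, s j ≤ M := by
    intro s hsA j
    by_cases hj : j ∈ s.support
    · exact le_trans (Finset.le_sup (f := s) hj) (Finset.le_sup (f := fun s => s.support.sup s) hsA)
    · rw [Finsupp.notMem_support_iff.mp hj]; exact Nat.zero_le _
  have step1 : ∑ s ∈ A, ∏ j ∈ s.support, g j (s j)
      = ∑ s ∈ A, ∏ j ∈ Finset.range N, g j (s j) := by
    refine Finset.sum_congr rfl fun s hsA => ?_
    exact Finset.prod_subset (hsupp s hsA) fun j _ hj => by
      rw [Finsupp.notMem_support_iff.mp hj, hg0]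
  rw [step1]
  have step2 := sum_prod_le_prod_sum (Finset.range N) (fun _ => Finset.range (M + 1)) g hg A
    (fun s j => s j)
    (by
      intro a ha b hb h
      ext j
      by_cases hj : j ∈ Finset.range N
      · exact h j hj
      · have h1 : j ∉ a.support := fun hc => hj (hsupp a ha hc)
        have h2 : j ∉ b.support := fun hc => hj (hsupp b hb hc)
        rw [Finsupp.notMem_support_iff.mp h1, Finsupp.notMem_support_iff.mp h2])
    (fun a ha i _ => Finset.mem_range.mpr (Nat.lt_succ_of_le (hval a ha i)))
  refine le_trans step2 ?_
  have step3 : ∀ j, ∑ n ∈ Finset.range (M + 1), g j n ≤ t j + 1 := by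
    intro j
    rw [Finset.sum_range_succ']
    have : ∑ i ∈ Finset.range M, g j (i + 1) ≤ t j :=
      Summable.sum_le_tsum _ (fun n _ => hg j (n + 1)) ((summable_nat_add_iff 1).mpr (hs j))
    rw [hg0]
    linarith
  calc ∏ j ∈ Finset.range N, ∑ n ∈ Finset.range (M + 1), g j n
      ≤ ∏ j ∈ Finset.range N, (t j + 1) :=
        Finset.prod_le_prod (fun j _ => Finset.sum_nonneg fun n _ => hg j n)
          (fun j _ => step3 j)
    _ ≤ ∏ j ∈ Finset.range N, Real.exp (t j) :=
        Finset.prod_le_prod (fun j _ => by linarith [htn j]) (fun j _ => Real.add_one_le_exp (t j))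
    _ = Real.exp (∑ j ∈ Finset.range N, t j) := (Real.exp_sum _ _).symm
    _ ≤ Real.exp (∑' j, t j) :=
        Real.exp_le_exp.mpr (Summable.sum_le_tsum _ (fun j _ => htn j) ht)

/-- The factor `p_s = ∏_{j∈J_s} (1 + λ s_j)^θ`. -/
noncomputable def pWeight (θ lam : ℝ) (s : ℕ →₀ ℕ) : ℝ :=
  ∏ j ∈ s.support, (1 + lam * (s j : ℝ)) ^ θ

/-- The majorant
`β_s = c^{|J_s|} (∏_{j∈J_s} s_j^{-r}) Σ_{k : J_k = J_s, k_j ≤ 2r} ∏_{j∈J_s} ρ_j^{-k_j}`. -/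
noncomputable def betaRho (c : ℝ) (r : ℕ) (ρ : ℕ → ℝ) (s : ℕ →₀ ℕ) : ℝ :=
  c ^ s.support.card * (∏ j ∈ s.support, (s j : ℝ) ^ (-(r : ℝ))) *
    ∑' k : {k : ℕ →₀ ℕ // k.support = s.support ∧ ∀ j, k j ≤ 2 * r},
      ∏ j ∈ s.support, ρ j ^ (-(k.1 j : ℝ))

/-- Sequence-space core of the `ℓ_p`-summability theorem under the assumption
`ρ⁻¹ ∈ ℓ_p`: if `0 < p`, `p(r - θ) > 1` and `Σ_j ρ_j^{-p} < ∞`, then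
`Σ_{s∈F} (p_s β_s)^p < ∞`. -/
theorem summable_pWeight_betaRho (p θ lam c : ℝ) (r : ℕ)
    (hp : 0 < p) (hθ : 0 ≤ θ) (hlam : 0 ≤ lam) (hc : 0 ≤ c) (hr : 0 < r)
    (hrθ : 1 < p * ((r : ℝ) - θ))
    (ρ : ℕ → ℝ) (hρ : ∀ j, 0 < ρ j) (hρp : Summable fun j => ρ j ^ (-p)) :
    Summable fun s : ℕ →₀ ℕ => (pWeight θ lam s * betaRho c r ρ s) ^ p := by
  classical
  set C : ℕ → ℝ := fun j => ∑ m ∈ Finset.Icc 1 (2 * r), ρ j ^ (-(m : ℝ)) with hCdef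
  have hCn : ∀ j, 0 ≤ C j := fun j => Finset.sum_nonneg fun m _ => Real.rpow_nonneg (hρ j).le _
  set e : ℝ := -(p * ((r : ℝ) - θ)) with he
  have hE : Summable (fun n : ℕ => (n : ℝ) ^ e) := Real.summable_nat_rpow.mpr (by rw [he]; linarith)
  set g : ℕ → ℕ → ℝ := fun j n =>
    if n = 0 then 1 else (c * (1 + lam * n) ^ θ * (n : ℝ) ^ (-(r : ℝ)) * C j) ^ p with hgdef
  have hlamn : ∀ n : ℕ, (0:ℝ) ≤ 1 + lam * n := fun n =>
    add_nonneg zero_le_one (mul_nonneg hlam (Nat.cast_nonneg n))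
  have hbasen : ∀ j (n : ℕ), 0 ≤ c * (1 + lam * n) ^ θ * (n : ℝ) ^ (-(r : ℝ)) * C j := fun j n =>
    mul_nonneg (mul_nonneg (mul_nonneg hc (Real.rpow_nonneg (hlamn n) _))
      (Real.rpow_nonneg (Nat.cast_nonneg n) _)) (hCn j)
  have hgn : ∀ j n, 0 ≤ g j n := by
    intro j n
    rw [hgdef]
    dsimp only
    split
    · exact zero_le_one
    · exact Real.rpow_nonneg (hbasen j n) p
  have hg0 : ∀ j, g j 0 = 1 := fun j => if_pos rfl
  set D : ℕ → ℝ := fun j => (c * C j * (1 + lam) ^ θ) ^ p with hDdef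
  have hDn : ∀ j, 0 ≤ D j := fun j =>
    Real.rpow_nonneg (mul_nonneg (mul_nonneg hc (hCn j)) (Real.rpow_nonneg (by linarith) _)) _
  have hbound : ∀ j (n : ℕ), 1 ≤ n → g j n ≤ D j * (n : ℝ) ^ e := by
    intro j n hn
    have hn0 : n ≠ 0 := by omega
    have hnR : (1 : ℝ) ≤ (n : ℝ) := by exact_mod_cast hn
    have hnpos : (0 : ℝ) < (n : ℝ) := by linarith
    rw [hgdef]
    dsimp only
    rw [if_neg hn0]
    have h2 : (1 + lam * n : ℝ) ^ θ ≤ ((1 + lam) * n) ^ θ :=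
      Real.rpow_le_rpow (hlamn n) (by nlinarith) hθ
    have h3 : ((1 + lam) * (n : ℝ)) ^ θ = (1 + lam) ^ θ * (n : ℝ) ^ θ :=
      Real.mul_rpow (by linarith) hnpos.le
    have hbase : c * (1 + lam * n) ^ θ * (n : ℝ) ^ (-(r : ℝ)) * C j
        ≤ (c * C j * (1 + lam) ^ θ) * (n : ℝ) ^ (θ - (r : ℝ)) := by
      have h4 : (n : ℝ) ^ (θ - (r : ℝ)) = (n : ℝ) ^ θ * (n : ℝ) ^ (-(r : ℝ)) := by
        rw [← Real.rpow_add hnpos]; ring_nf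
      rw [h4]
      have h5 : c * (1 + lam * n) ^ θ ≤ c * ((1 + lam) ^ θ * (n : ℝ) ^ θ) :=
        mul_le_mul_of_nonneg_left (h3 ▸ h2) hc
      have h6 := mul_le_mul_of_nonneg_right
        (mul_le_mul_of_nonneg_right h5 (Real.rpow_nonneg (Nat.cast_nonneg n) (-(r : ℝ)))) (hCn j)
      calc c * (1 + lam * n) ^ θ * (n : ℝ) ^ (-(r : ℝ)) * C j
          ≤ c * ((1 + lam) ^ θ * (n : ℝ) ^ θ) * (n : ℝ) ^ (-(r : ℝ)) * C j := h6
        _ = (c * C j * (1 + lam) ^ θ) * ((n : ℝ) ^ θ * (n : ℝ) ^ (-(r : ℝ))) := by ring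
    have h7 := Real.rpow_le_rpow (hbasen j n) hbase hp.le
    refine le_trans h7 ?_
    rw [Real.mul_rpow (mul_nonneg (mul_nonneg hc (hCn j)) (Real.rpow_nonneg (by linarith) _))
      (Real.rpow_nonneg hnpos.le _), ← Real.rpow_mul hnpos.le,
      show (θ - (r : ℝ)) * p = e by rw [he]; ring]
  -- summability of each g j
  have hsj : ∀ j, Summable (g j) := by
    intro j
    rw [← summable_nat_add_iff 1]
    exact Summable.of_nonneg_of_le (fun n => hgn j (n + 1))
      (fun n => hbound j (n + 1) (by omega))
      ((summable_nat_add_iff 1).mpr (hE.mul_left (D j)))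
  -- summability of C ^ p
  have hCp : Summable (fun j => C j ^ p) := by
    obtain ⟨N, hN⟩ := Filter.eventually_atTop.mp
      (hρp.tendsto_atTop_zero.eventually_lt_const one_pos)
    have hρ1 : ∀ j, N ≤ j → 1 ≤ ρ j := by
      intro j hj
      by_contra hlt
      push_neg at hlt
      have h1 : 1 < ρ j ^ (-p) :=
        (Real.one_lt_rpow_iff_of_pos (hρ j)).mpr (Or.inr ⟨hlt, by linarith⟩)
      linarith [hN j hj]
    have hCle : ∀ j, N ≤ j → C j ≤ (2 * r : ℕ) * ρ j ^ (-1 : ℝ) := by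
      intro j hj
      rw [hCdef]
      calc ∑ m ∈ Finset.Icc 1 (2 * r), ρ j ^ (-(m : ℝ))
          ≤ ∑ m ∈ Finset.Icc 1 (2 * r), ρ j ^ (-1 : ℝ) := by
            refine Finset.sum_le_sum fun m hm => ?_
            refine Real.rpow_le_rpow_of_exponent_le (hρ1 j hj) ?_
            have h1 : 1 ≤ m := (Finset.mem_Icc.mp hm).1
            have : (1 : ℝ) ≤ (m : ℝ) := by exact_mod_cast h1
            linarith
        _ = (2 * r : ℕ) * ρ j ^ (-1 : ℝ) := by
            rw [Finset.sum_const, Nat.card_Icc, nsmul_eq_mul]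
            norm_num
    have hCple : ∀ j, N ≤ j → C j ^ p ≤ (2 * r : ℕ) ^ p * ρ j ^ (-p) := by
      intro j hj
      calc C j ^ p ≤ ((2 * r : ℕ) * ρ j ^ (-1 : ℝ)) ^ p :=
            Real.rpow_le_rpow (hCn j) (hCle j hj) hp.le
        _ = (2 * r : ℕ) ^ p * (ρ j ^ (-1 : ℝ)) ^ p :=
            Real.mul_rpow (Nat.cast_nonneg _) (Real.rpow_nonneg (hρ j).le _)
        _ = (2 * r : ℕ) ^ p * ρ j ^ (-p) := by
            rw [← Real.rpow_mul (hρ j).le]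
            norm_num
    rw [← summable_nat_add_iff N]
    exact Summable.of_nonneg_of_le (fun j => Real.rpow_nonneg (hCn _) p)
      (fun j => hCple (j + N) (by omega))
      (((summable_nat_add_iff N).mpr hρp).mul_left _)
  -- summability of the tails
  have hKs : Summable (fun n : ℕ => ((n + 1 : ℕ) : ℝ) ^ e) := (summable_nat_add_iff 1).mpr hE
  set K : ℝ := ∑' n : ℕ, ((n + 1 : ℕ) : ℝ) ^ e with hKdef
  have htle : ∀ j, ∑' n, g j (n + 1) ≤ D j * K := by
    intro j
    calc ∑' n, g j (n + 1) ≤ ∑' n : ℕ, D j * ((n + 1 : ℕ) : ℝ) ^ e :=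
          Summable.tsum_le_tsum (fun n => hbound j (n + 1) (by omega))
            ((summable_nat_add_iff 1).mpr (hsj j)) (hKs.mul_left (D j))
      _ = D j * K := tsum_mul_left
  have hDK : Summable (fun j => D j * K) := by
    have h1 : ∀ j, D j * K = ((c * (1 + lam) ^ θ) ^ p * K) * C j ^ p := by
      intro j
      rw [hDdef]
      dsimp only
      rw [show c * C j * (1 + lam) ^ θ = (c * (1 + lam) ^ θ) * C j by ring,
        Real.mul_rpow (mul_nonneg hc (Real.rpow_nonneg (by linarith) _)) (hCn j)]
      ring
    exact ((hCp.mul_left _)).congr fun j => (h1 j).symm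
  have ht : Summable (fun j => ∑' n, g j (n + 1)) :=
    Summable.of_nonneg_of_le (fun j => tsum_nonneg fun n => hgn j (n + 1)) htle hDK
  have hmaj := summable_finsupp_prod g hgn hg0 hsj ht
  -- nonnegativity of pWeight and betaRho
  have hpWn : ∀ s : ℕ →₀ ℕ, 0 ≤ pWeight θ lam s := fun s =>
    Finset.prod_nonneg fun j _ => Real.rpow_nonneg (hlamn (s j)) θ
  have hbetan : ∀ s : ℕ →₀ ℕ, 0 ≤ betaRho c r ρ s := fun s =>
    mul_nonneg (mul_nonneg (pow_nonneg hc _)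
      (Finset.prod_nonneg fun j _ => Real.rpow_nonneg (Nat.cast_nonneg _) _))
      (tsum_nonneg fun k => Finset.prod_nonneg fun j _ => Real.rpow_nonneg (hρ j).le _)
  refine Summable.of_nonneg_of_le
    (fun s => Real.rpow_nonneg (mul_nonneg (hpWn s) (hbetan s)) p) (fun s => ?_) hmaj
  -- the tsum bound
  have hts : (∑' k : {k : ℕ →₀ ℕ // k.support = s.support ∧ ∀ j, k j ≤ 2 * r},
      ∏ j ∈ s.support, ρ j ^ (-(k.1 j : ℝ))) ≤ ∏ j ∈ s.support, C j := by
    refine tsum_le_of_sum_le' (Finset.prod_nonneg fun j _ => hCn j) fun T => ?_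
    refine sum_prod_le_prod_sum s.support (fun _ => Finset.Icc 1 (2 * r))
      (fun j n => ρ j ^ (-(n : ℝ))) (fun j n => Real.rpow_nonneg (hρ j).le _) T
      (fun k j => k.1 j) ?_ ?_
    · intro a _ b _ h
      apply Subtype.ext
      ext j
      by_cases hj : j ∈ s.support
      · exact h j hj
      · have h1 : j ∉ a.1.support := by rw [a.2.1]; exact hj
        have h2 : j ∉ b.1.support := by rw [b.2.1]; exact hj
        rw [Finsupp.notMem_support_iff.mp h1, Finsupp.notMem_support_iff.mp h2]
    · intro a _ j hj
      rw [Finset.mem_Icc]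
      refine ⟨?_, a.2.2 j⟩
      have h1 : j ∈ a.1.support := by rw [a.2.1]; exact hj
      exact Nat.one_le_iff_ne_zero.mpr (Finsupp.mem_support_iff.mp h1)
  have hbeta : betaRho c r ρ s ≤ (c ^ s.support.card *
      ∏ j ∈ s.support, (s j : ℝ) ^ (-(r : ℝ))) * ∏ j ∈ s.support, C j := by
    unfold betaRho
    exact mul_le_mul_of_nonneg_left hts (mul_nonneg (pow_nonneg hc _)
      (Finset.prod_nonneg fun j _ => Real.rpow_nonneg (Nat.cast_nonneg _) _))
  have hprod : pWeight θ lam s * ((c ^ s.support.card *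
      ∏ j ∈ s.support, (s j : ℝ) ^ (-(r : ℝ))) * ∏ j ∈ s.support, C j)
      = ∏ j ∈ s.support, (c * (1 + lam * (s j : ℕ)) ^ θ * ((s j : ℕ) : ℝ) ^ (-(r : ℝ)) * C j) := by
    unfold pWeight
    rw [Finset.prod_mul_distrib, Finset.prod_mul_distrib, Finset.prod_mul_distrib,
      Finset.prod_const]
    ring
  have hle1 : pWeight θ lam s * betaRho c r ρ s
      ≤ ∏ j ∈ s.support, (c * (1 + lam * (s j : ℕ)) ^ θ * ((s j : ℕ) : ℝ) ^ (-(r : ℝ)) * C j) := by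
    rw [← hprod]
    exact mul_le_mul_of_nonneg_left hbeta (hpWn s)
  calc (pWeight θ lam s * betaRho c r ρ s) ^ p
      ≤ (∏ j ∈ s.support,
          (c * (1 + lam * (s j : ℕ)) ^ θ * ((s j : ℕ) : ℝ) ^ (-(r : ℝ)) * C j)) ^ p :=
        Real.rpow_le_rpow (mul_nonneg (hpWn s) (hbetan s)) hle1 hp.le
    _ = ∏ j ∈ s.support,
          (c * (1 + lam * (s j : ℕ)) ^ θ * ((s j : ℕ) : ℝ) ^ (-(r : ℝ)) * C j) ^ p :=
        (Real.finset_prod_rpow _ _ (fun j _ => hbasen j (s j)) p).symm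
    _ = ∏ j ∈ s.support, g j (s j) := by
        refine Finset.prod_congr rfl fun j hj => ?_
        rw [hgdef]
        dsimp only
        rw [if_neg (Finsupp.mem_support_iff.mp hj)]
end

section
/- Let 0 < p < 2 and q := 2p/(2-p). Let ι be a countable index set, (β_s)_{s∈ι} positive reals, (w_s)_{s∈ι} reals with w_s ≥ 1, and M > 0 such that Σ_{s∈ι} (w_s^{q/p} β_s)^p ≤ M. Define σ_s := β_s^{p/2 - 1}. Then for every family (a_s)_{s∈ι} with 0 ≤ a_s ≤ β_s one has Σ_{s∈ι} (σ_s a_s)² ≤ M and Σ_{s∈ι} (w_s σ_s^{-1})^q ≤ M. -/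
/-! With `σ = β^{p/2-1}` one has `(σ β)² = β^p`, so `a ≤ β` bounds `(σ a)²` termwise by
`β^p ≤ (w^{q/p} β)^p`. For the second sum, `q = 2p/(2-p)` is exactly the exponent with
`(1 - p/2) q = p`, which makes `(w σ⁻¹)^q = (w^{q/p} β)^p` an identity term by term. -/

namespace Real

theorem rpow_half_sub_one_mul_sq_le {p a b : ℝ} (hb : 0 < b) (ha : 0 ≤ a) (hab : a ≤ b) :
    (b ^ (p / 2 - 1) * a) ^ 2 ≤ b ^ p := by
  have hσ : 0 ≤ b ^ (p / 2 - 1) := (rpow_pos_of_pos hb _).le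
  calc (b ^ (p / 2 - 1) * a) ^ 2 ≤ (b ^ (p / 2 - 1) * b) ^ 2 := by gcongr
    _ = (b ^ (p / 2)) ^ 2 := by rw [rpow_sub_one hb.ne', div_mul_cancel₀ _ hb.ne']
    _ = b ^ p := by rw [← rpow_mul_natCast hb.le]; norm_num

theorem rpow_le_rpow_mul_of_one_le {p r w b : ℝ} (hp : 0 ≤ p) (hr : 0 ≤ r) (hw : 1 ≤ w)
    (hb : 0 ≤ b) : b ^ p ≤ (w ^ r * b) ^ p :=
  rpow_le_rpow hb (le_mul_of_one_le_left hb (one_le_rpow hw hr)) hp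

theorem mul_inv_rpow_half_sub_one_rpow {p w b : ℝ} (hp0 : p ≠ 0) (hp2 : p ≠ 2) (hw : 0 ≤ w)
    (hb : 0 < b) :
    (w * (b ^ (p / 2 - 1))⁻¹) ^ (2 * p / (2 - p)) =
      (w ^ ((2 * p / (2 - p)) / p) * b) ^ p := by
  have h2p : 2 - p ≠ 0 := sub_ne_zero.mpr (Ne.symm hp2)
  have hinv : (b ^ (p / 2 - 1))⁻¹ = b ^ (1 - p / 2) := by
    rw [← rpow_neg hb.le, neg_sub]
  rw [hinv, mul_rpow hw (rpow_nonneg hb.le _), mul_rpow (rpow_nonneg hw _) hb.le,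
    ← rpow_mul hb.le, ← rpow_mul hw, div_mul_cancel₀ _ hp0]
  congr 2
  field_simp

end Real

theorem weighted_l2_from_lp_general (p M : ℝ) (hp0 : 0 < p) (hp2 : p < 2)
    {ι : Type*} (β w : ι → ℝ) (hβ : ∀ s, 0 < β s) (hw : ∀ s, 1 ≤ w s)
    (hsum : Summable fun s => (w s ^ ((2 * p / (2 - p)) / p) * β s) ^ p)
    (hsum' : ∑' s, (w s ^ ((2 * p / (2 - p)) / p) * β s) ^ p ≤ M)
    (a : ι → ℝ) (ha0 : ∀ s, 0 ≤ a s) (haβ : ∀ s, a s ≤ β s) :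
    (Summable fun s => (β s ^ (p / 2 - 1) * a s) ^ 2) ∧
    (∑' s, (β s ^ (p / 2 - 1) * a s) ^ 2 ≤ M) ∧
    (Summable fun s => (w s * (β s ^ (p / 2 - 1))⁻¹) ^ (2 * p / (2 - p))) ∧
    (∑' s, (w s * (β s ^ (p / 2 - 1))⁻¹) ^ (2 * p / (2 - p)) ≤ M) := by
  have hqp : 0 ≤ (2 * p / (2 - p)) / p := by
    have : 0 < 2 - p := by linarith
    positivity
  have hbound : ∀ s, (β s ^ (p / 2 - 1) * a s) ^ 2 ≤
      (w s ^ ((2 * p / (2 - p)) / p) * β s) ^ p :=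
    fun s => (Real.rpow_half_sub_one_mul_sq_le (hβ s) (ha0 s) (haβ s)).trans
      (Real.rpow_le_rpow_mul_of_one_le hp0.le hqp (hw s) (hβ s).le)
  have hident : ∀ s, (w s * (β s ^ (p / 2 - 1))⁻¹) ^ (2 * p / (2 - p)) =
      (w s ^ ((2 * p / (2 - p)) / p) * β s) ^ p :=
    fun s => Real.mul_inv_rpow_half_sub_one_rpow hp0.ne' hp2.ne (zero_le_one.trans (hw s)) (hβ s)
  have hsumL2 : Summable fun s => (β s ^ (p / 2 - 1) * a s) ^ 2 :=
    hsum.of_nonneg_of_le (fun s => sq_nonneg _) hbound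
  exact ⟨hsumL2, (hsumL2.tsum_le_tsum hbound hsum).trans hsum',
    hsum.congr fun s => (hident s).symm, (tsum_congr hident).trans_le hsum'⟩

/-- Construction of weights turning `ℓ_p`-summability into weighted `ℓ_2`-summability:
with `q = 2p/(2-p)` and `Σ (w_s^{q/p} β_s)^p ≤ M`, the weights `σ_s := β_s^{p/2-1}`
satisfy `Σ (σ_s a_s)² ≤ M` for any `0 ≤ a_s ≤ β_s`, together with
`Σ (w_s σ_s^{-1})^q ≤ M`. -/
theorem weighted_l2_from_lp (p M : ℝ) (hp0 : 0 < p) (hp2 : p < 2) (hM : 0 < M)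
    {ι : Type*} [Countable ι] (β w : ι → ℝ) (hβ : ∀ s, 0 < β s) (hw : ∀ s, 1 ≤ w s)
    (hsum : Summable fun s => (w s ^ ((2 * p / (2 - p)) / p) * β s) ^ p)
    (hsum' : ∑' s, (w s ^ ((2 * p / (2 - p)) / p) * β s) ^ p ≤ M)
    (a : ι → ℝ) (ha0 : ∀ s, 0 ≤ a s) (haβ : ∀ s, a s ≤ β s) :
    (Summable fun s => (β s ^ (p / 2 - 1) * a s) ^ 2) ∧
    (∑' s, (β s ^ (p / 2 - 1) * a s) ^ 2 ≤ M) ∧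
    (Summable fun s => (w s * (β s ^ (p / 2 - 1))⁻¹) ^ (2 * p / (2 - p))) ∧
    (∑' s, (w s * (β s ^ (p / 2 - 1))⁻¹) ^ (2 * p / (2 - p)) ≤ M) :=
  weighted_l2_from_lp_general p M hp0 hp2 β w hβ hw hsum hsum' a ha0 haβ
end

section
/- Let 0 < p ≤ 1, θ ≥ 0, λ ≥ 0, c ≥ 0, let r be a positive integer with p(r - θ) > 1, and let b = (b_j)_{j≥1} be a sequence of non-negative reals. For s ∈ F define p_s := ∏_{j∈J_s} (1 + λ s_j)^θ and β_s := c^{|J_s|} · (∏_{j∈J_s} s_j^{-r}) · Σ_{k∈F : J_k = J_s, k_j ≤ 2r for all j} (∏_{j∈J_s} b_j^{k_j}) · (|k|_1)! / (∏_{j∈J_s} k_j!). Then there exists a constant K ≥ 1, depending only on p, θ, λ, c, and r, such that Σ_{s∈F} (p_s β_s)^p ≤ Σ_{k∈F : k_j ≤ 2r for all j} ( (∏_j (K b_j)^{k_j}) · (|k|_1)! / (∏_j k_j!) )^p. -/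
/-!
Expanding `β_s` and using `(∑ xᵢ) ^ p ≤ ∑ xᵢ ^ p` for `0 < p ≤ 1` bounds `(p_s β_s) ^ p` by a sum
over the admissible `k` with `J_k = J_s`. After exchanging the order of summation, the sum over all
`s` with a fixed support `J` factorises and is at most `A ^ |J|`, where
`A = ∑ₙ ((1 + λ n) ^ θ n ^ (-r)) ^ p` is finite because its terms are `O(n ^ (-p (r - θ)))` and
`p (r - θ) > 1`. Since `|J_k| ≤ |k|₁`, any `K ≥ 1` with `K ^ p ≥ c ^ p A` absorbs the factor
`(c ^ p A) ^ |J_k|` into `K ^ (p |k|₁)`.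
-/

open scoped ENNReal

/-- The majorant
`β_s = c^{|J_s|} (∏_{j∈J_s} s_j^{-r}) Σ_{k : J_k = J_s, k_j ≤ 2r}
  (∏_{j∈J_s} b_j^{k_j}) |k|₁! / ∏_{j∈J_s} k_j!`. -/
noncomputable def betaB (c : ℝ) (r : ℕ) (b : ℕ → ℝ) (s : ℕ →₀ ℕ) : ℝ :=
  c ^ s.support.card * (∏ j ∈ s.support, (s j : ℝ) ^ (-(r : ℝ))) *
    ∑' k : {k : ℕ →₀ ℕ // k.support = s.support ∧ ∀ j, k j ≤ 2 * r},
      (∏ j ∈ s.support, b j ^ (k.1 j)) *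
        ((∑ j ∈ s.support, k.1 j).factorial : ℝ) /
          ∏ j ∈ s.support, ((k.1 j).factorial : ℝ)

open Finset

namespace ENNReal

variable {α β : Type*}

theorem rpow_sum_le_sum_rpow (s : Finset α) (f : α → ℝ≥0∞) {p : ℝ} (hp0 : 0 < p) (hp1 : p ≤ 1) :
    (∑ i ∈ s, f i) ^ p ≤ ∑ i ∈ s, f i ^ p := by
  classical
  induction s using Finset.induction_on with
  | empty => simp [zero_rpow_of_pos hp0]
  | insert a s ha ih =>
    rw [sum_insert ha, sum_insert ha]
    exact (rpow_add_le_add_rpow _ _ hp0.le hp1).trans (add_le_add_right ih _)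

theorem rpow_tsum_le_tsum_rpow (f : α → ℝ≥0∞) {p : ℝ} (hp0 : 0 < p) (hp1 : p ≤ 1) :
    (∑' i, f i) ^ p ≤ ∑' i, f i ^ p := by
  rw [← le_rpow_inv_iff hp0]
  refine tsum_le_of_sum_le' zero_le fun s => ?_
  rw [le_rpow_inv_iff hp0]
  exact (rpow_sum_le_sum_rpow s f hp0 hp1).trans (ENNReal.sum_le_tsum s)

theorem ofReal_rpow_tsum_le {f : α → ℝ} (hf : ∀ i, 0 ≤ f i) {p : ℝ} (hp0 : 0 < p) (hp1 : p ≤ 1) :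
    ENNReal.ofReal ((∑' i, f i) ^ p) ≤ ∑' i, ENNReal.ofReal (f i ^ p) := by
  by_cases hs : Summable f
  · rw [tsum_congr fun i => (ofReal_rpow_of_nonneg (hf i) hp0.le).symm,
      ← ofReal_rpow_of_nonneg (tsum_nonneg hf) hp0.le, ofReal_tsum_of_nonneg hf hs]
    exact rpow_tsum_le_tsum_rpow _ hp0 hp1
  · simp [tsum_eq_zero_of_not_summable hs, Real.zero_rpow hp0.ne']

theorem ofReal_mul_rpow {x y : ℝ} (hx : 0 ≤ x) (hy : 0 ≤ y) (p : ℝ) :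
    ENNReal.ofReal ((x * y) ^ p) = ENNReal.ofReal (x ^ p) * ENNReal.ofReal (y ^ p) := by
  rw [Real.mul_rpow hx hy, ofReal_mul (Real.rpow_nonneg hx p)]

theorem ofReal_prod_rpow {s : Finset α} {f : α → ℝ} (hf : ∀ i ∈ s, 0 ≤ f i) (p : ℝ) :
    ENNReal.ofReal ((∏ i ∈ s, f i) ^ p) = ∏ i ∈ s, ENNReal.ofReal (f i ^ p) := by
  rw [← Real.finsetProd_rpow s f hf,
    ofReal_prod_of_nonneg fun i hi => Real.rpow_nonneg (hf i hi) p]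

theorem ofReal_pow_rpow {x : ℝ} (hx : 0 ≤ x) (n : ℕ) (p : ℝ) :
    ENNReal.ofReal ((x ^ n) ^ p) = ENNReal.ofReal (x ^ p) ^ n := by
  rw [← Real.rpow_pow_comm hx, ofReal_pow (Real.rpow_nonneg hx p)]

theorem exists_one_le_le_ofReal_rpow {x : ℝ≥0∞} (hx : x ≠ ⊤) {p : ℝ} (hp : 0 < p) :
    ∃ K : ℝ, 1 ≤ K ∧ x ≤ ENNReal.ofReal (K ^ p) := by
  refine ⟨max 1 (x.toReal ^ p⁻¹), le_max_left _ _, ?_⟩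
  calc x = ENNReal.ofReal ((x.toReal ^ p⁻¹) ^ p) := by
        rw [Real.rpow_inv_rpow toReal_nonneg hp.ne', ofReal_toReal hx]
    _ ≤ _ := ofReal_le_ofReal (Real.rpow_le_rpow (by positivity) (le_max_right _ _) hp.le)

theorem tsum_tsum_subtype_comm (R : α → β → Prop) (P : β → Prop) (f : α → β → ℝ≥0∞) :
    ∑' a, ∑' b : {b // R a b ∧ P b}, f a b = ∑' b : {b // P b}, ∑' a : {a // R a b}, f a b := by
  let e : (Σ a, {b // R a b ∧ P b}) ≃ Σ b : {b // P b}, {a // R a b} :=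
    { toFun := fun x => ⟨⟨x.2, x.2.2.2⟩, ⟨x.1, x.2.2.1⟩⟩
      invFun := fun y => ⟨y.2, y.1, y.2.2, y.1.2⟩
      left_inv := fun _ => rfl
      right_inv := fun _ => rfl }
  calc _ = ∑' x : Σ a, {b // R a b ∧ P b}, f x.1 x.2 := (ENNReal.tsum_sigma' _).symm
    _ = ∑' y : Σ b : {b // P b}, {a // R a b}, f y.2 y.1 := e.tsum_eq (fun y => f y.2 y.1)
    _ = _ := ENNReal.tsum_sigma' _

end ENNReal

namespace Finsupp

variable {ι M : Type*} [AddCommMonoid M]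

noncomputable def supportSubsetInsertEquiv [DecidableEq ι] {a : ι} {J : Finset ι} (ha : a ∉ J) :
    {s : ι →₀ M // s.support ⊆ insert a J} ≃ M × {s : ι →₀ M // s.support ⊆ J} where
  toFun s := (s.1 a, ⟨s.1.erase a, fun j hj => by
    rw [support_erase, mem_erase] at hj
    exact (mem_insert.mp (s.2 hj.2)).resolve_left hj.1⟩)
  invFun x := ⟨single a x.1 + x.2.1, (support_add.trans (union_subset_union
    support_single_subset x.2.2)).trans (by rw [← insert_eq])⟩
  left_inv s := Subtype.ext (single_add_erase a s.1)
  right_inv x := by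
    have hx : x.2.1 a = 0 := notMem_support_iff.mp fun h => ha (x.2.2 h)
    ext
    · simp [hx]
    · simp [erase_add, erase_of_notMem_support (notMem_support_iff.mpr hx)]

theorem tsum_prod_of_support_subset (G : ι → M → ℝ≥0∞) (J : Finset ι) :
    ∑' s : {s : ι →₀ M // s.support ⊆ J}, ∏ j ∈ J, G j (s.1 j) = ∏ j ∈ J, ∑' m, G j m := by
  classical
  induction J using Finset.induction_on with
  | empty =>
    have : Unique {s : ι →₀ M // s.support ⊆ ∅} :=
      ⟨⟨⟨0, by simp⟩⟩, fun s => Subtype.ext (support_eq_empty.mp (subset_empty.mp s.2))⟩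
    simp
  | insert a J ha ih =>
    have hsplit : ∀ x : M × {s : ι →₀ M // s.support ⊆ J},
        ∏ j ∈ insert a J, G j (((supportSubsetInsertEquiv ha).symm x).1 j) =
          G a x.1 * ∏ j ∈ J, G j (x.2.1 j) := by
      rintro ⟨m, t, ht⟩
      have hta : t a = 0 := notMem_support_iff.mp fun h => ha (ht h)
      rw [prod_insert ha]
      congr 1
      · simp [supportSubsetInsertEquiv, hta]
      · refine Finset.prod_congr rfl fun j hj => ?_
        simp [supportSubsetInsertEquiv, single_eq_of_ne (ne_of_mem_of_not_mem hj ha)]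
    rw [← (supportSubsetInsertEquiv ha).symm.tsum_eq, tsum_congr hsplit,
      ENNReal.tsum_prod
        (f := fun m (t : {s : ι →₀ M // s.support ⊆ J}) => G a m * ∏ j ∈ J, G j (t.1 j)),
      prod_insert ha, ← ih, ← ENNReal.tsum_mul_right]
    simp_rw [ENNReal.tsum_mul_left]

theorem tsum_prod_of_support_eq_le (G : ι → M → ℝ≥0∞) (J : Finset ι) :
    ∑' s : {s : ι →₀ M // J = s.support}, ∏ j ∈ J, G j (s.1 j) ≤ ∏ j ∈ J, ∑' m, G j m := by
  rw [← tsum_prod_of_support_subset]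
  exact ENNReal.tsum_comp_le_tsum_of_injective
    (f := fun s : {s : ι →₀ M // J = s.support} => (⟨s.1, s.2.ge⟩ : {s : ι →₀ M // s.support ⊆ J}))
    (fun _ _ h => Subtype.ext (by simpa using h)) (fun s => ∏ j ∈ J, G j (s.1 j))

theorem card_support_le_sum (k : ι →₀ ℕ) :
    k.support.card ≤ ∑ j ∈ k.support, k j := by
  simpa using k.support.card_nsmul_le_sum k 1 fun j hj => Nat.one_le_iff_ne_zero.mpr
    (mem_support_iff.mp hj)

end Finsupp

noncomputable def coordWeight (θ lam r : ℝ) (n : ℕ) : ℝ :=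
  (1 + lam * n) ^ θ * (n : ℝ) ^ (-r)

theorem coordWeight_nonneg {θ lam : ℝ} (r : ℝ) (hlam : 0 ≤ lam) (n : ℕ) :
    0 ≤ coordWeight θ lam r n :=
  mul_nonneg (Real.rpow_nonneg (by positivity) _) (Real.rpow_nonneg n.cast_nonneg _)

theorem coordWeight_rpow_le {p θ lam r : ℝ} (hp : 0 ≤ p) (hθ : 0 ≤ θ) (hlam : 0 ≤ lam) {n : ℕ}
    (hn : 1 ≤ n) :
    coordWeight θ lam r n ^ p ≤ (1 + lam) ^ (θ * p) * (n : ℝ) ^ (-(p * (r - θ))) := by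
  have hn' : (1 : ℝ) ≤ n := by exact_mod_cast hn
  have hbase : 1 + lam * n ≤ (1 + lam) * n := by nlinarith
  have hweight : coordWeight θ lam r n ≤ (1 + lam) ^ θ * (n : ℝ) ^ (θ - r) := by
    calc coordWeight θ lam r n ≤ ((1 + lam) * n) ^ θ * (n : ℝ) ^ (-r) := by
          unfold coordWeight
          gcongr
      _ = (1 + lam) ^ θ * (n : ℝ) ^ (θ - r) := by
          rw [Real.mul_rpow (by positivity) (by positivity), mul_assoc,
            ← Real.rpow_add (by positivity), sub_eq_add_neg]
  calc coordWeight θ lam r n ^ p ≤ ((1 + lam) ^ θ * (n : ℝ) ^ (θ - r)) ^ p :=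
        Real.rpow_le_rpow (coordWeight_nonneg r hlam n) hweight hp
    _ = (1 + lam) ^ (θ * p) * (n : ℝ) ^ (-(p * (r - θ))) := by
        rw [Real.mul_rpow (by positivity) (by positivity), ← Real.rpow_mul (by positivity),
          ← Real.rpow_mul (by positivity)]
        ring_nf

theorem summable_coordWeight_rpow {p θ lam r : ℝ} (hp : 0 ≤ p) (hθ : 0 ≤ θ) (hlam : 0 ≤ lam)
    (hrθ : 1 < p * (r - θ)) : Summable fun n => coordWeight θ lam r n ^ p := by
  have hdom : Summable fun n : ℕ => (1 + lam) ^ (θ * p) * ((n + 1 : ℕ) : ℝ) ^ (-(p * (r - θ))) :=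
    (summable_nat_add_iff 1).mpr ((Real.summable_nat_rpow.mpr (by linarith)).mul_left _)
  refine (summable_nat_add_iff 1).mp (hdom.of_nonneg_of_le (fun n => ?_) fun n => ?_)
  · exact Real.rpow_nonneg (coordWeight_nonneg r hlam _) p
  · exact coordWeight_rpow_le hp hθ hlam (Nat.le_add_left 1 n)

theorem tsum_ofReal_coordWeight_rpow_ne_top {p θ lam r : ℝ} (hp : 0 ≤ p) (hθ : 0 ≤ θ)
    (hlam : 0 ≤ lam) (hrθ : 1 < p * (r - θ)) :
    ∑' n, ENNReal.ofReal (coordWeight θ lam r n ^ p) ≠ ⊤ := by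
  rw [← ENNReal.ofReal_tsum_of_nonneg (fun n => Real.rpow_nonneg (coordWeight_nonneg r hlam n) p)
    (summable_coordWeight_rpow hp hθ hlam hrθ)]
  exact ENNReal.ofReal_ne_top

section Multinomial

variable {ι : Type*}

noncomputable def multinomialTerm (b : ι → ℝ) (J : Finset ι) (k : ι →₀ ℕ) : ℝ :=
  (∏ j ∈ J, b j ^ k j) * ((∑ j ∈ J, k j).factorial : ℝ) / ∏ j ∈ J, ((k j).factorial : ℝ)

theorem multinomialTerm_nonneg {b : ι → ℝ} (hb : ∀ j, 0 ≤ b j) (J : Finset ι)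
    (k : ι →₀ ℕ) : 0 ≤ multinomialTerm b J k := by
  unfold multinomialTerm
  exact div_nonneg (mul_nonneg (prod_nonneg fun j _ => pow_nonneg (hb j) _) (Nat.cast_nonneg _))
    (prod_nonneg fun _ _ => Nat.cast_nonneg _)

theorem multinomialTerm_const_mul (K : ℝ) (b : ι → ℝ) (J : Finset ι) (k : ι →₀ ℕ) :
    multinomialTerm (fun j => K * b j) J k = K ^ (∑ j ∈ J, k j) * multinomialTerm b J k := by
  simp only [multinomialTerm, mul_pow, prod_mul_distrib, prod_pow_eq_pow_sum]
  ring

end Multinomial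

noncomputable def majorantTerm (p θ lam c r : ℝ) (b : ℕ → ℝ) (s k : ℕ →₀ ℕ) : ℝ≥0∞ :=
  (∏ j ∈ s.support, ENNReal.ofReal (coordWeight θ lam r (s j) ^ p)) *
    ENNReal.ofReal ((c ^ s.support.card * multinomialTerm b s.support k) ^ p)

theorem pWeight_mul_betaB (θ lam c : ℝ) (r : ℕ) (b : ℕ → ℝ) (s : ℕ →₀ ℕ) :
    pWeight θ lam s * betaB c r b s =
      ∑' k : {k : ℕ →₀ ℕ // k.support = s.support ∧ ∀ j, k j ≤ 2 * r},
        (∏ j ∈ s.support, coordWeight θ lam r (s j)) *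
          (c ^ s.support.card * multinomialTerm b s.support k) := by
  rw [betaB, ← tsum_mul_left, ← tsum_mul_left]
  refine tsum_congr fun k => ?_
  simp only [pWeight, coordWeight, multinomialTerm, prod_mul_distrib]
  ring

theorem ofReal_rpow_pWeight_mul_betaB_le {p θ lam c : ℝ} {r : ℕ} (hp0 : 0 < p) (hp1 : p ≤ 1)
    (hlam : 0 ≤ lam) (hc : 0 ≤ c) {b : ℕ → ℝ} (hb : ∀ j, 0 ≤ b j) (s : ℕ →₀ ℕ) :
    ENNReal.ofReal ((pWeight θ lam s * betaB c r b s) ^ p) ≤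
      ∑' k : {k : ℕ →₀ ℕ // k.support = s.support ∧ ∀ j, k j ≤ 2 * r},
        majorantTerm p θ lam c r b s k := by
  have hweight : ∀ j ∈ s.support, 0 ≤ coordWeight θ lam r (s j) := fun _ _ =>
    coordWeight_nonneg _ hlam _
  have hmult : ∀ k, 0 ≤ c ^ s.support.card * multinomialTerm b s.support k := fun k =>
    mul_nonneg (pow_nonneg hc _) (multinomialTerm_nonneg hb _ _)
  rw [pWeight_mul_betaB]
  refine (ENNReal.ofReal_rpow_tsum_le (fun k => ?_) hp0 hp1).trans_eq (tsum_congr fun k => ?_)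
  · exact mul_nonneg (prod_nonneg hweight) (hmult k)
  rw [ENNReal.ofReal_mul_rpow (prod_nonneg hweight) (hmult k), ENNReal.ofReal_prod_rpow hweight,
    majorantTerm]

theorem tsum_majorantTerm_le {p θ lam c K : ℝ} {r : ℝ} (hp : 0 ≤ p) (hc : 0 ≤ c) (hK1 : 1 ≤ K)
    (hK : ENNReal.ofReal (c ^ p) * ∑' n, ENNReal.ofReal (coordWeight θ lam r n ^ p) ≤
      ENNReal.ofReal (K ^ p)) {b : ℕ → ℝ} (hb : ∀ j, 0 ≤ b j) (k : ℕ →₀ ℕ) :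
    ∑' s : {s : ℕ →₀ ℕ // k.support = s.support}, majorantTerm p θ lam c r b s k ≤
      ENNReal.ofReal (multinomialTerm (fun j => K * b j) k.support k ^ p) := by
  set J := k.support
  set A := ∑' n, ENNReal.ofReal (coordWeight θ lam r n ^ p)
  set W := fun n => ENNReal.ofReal (coordWeight θ lam r n ^ p)
  set D := multinomialTerm b J k
  have hD : 0 ≤ D := multinomialTerm_nonneg hb _ _
  have hK0 : 0 ≤ K := zero_le_one.trans hK1
  calc ∑' s : {s : ℕ →₀ ℕ // J = s.support}, majorantTerm p θ lam c r b s k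
      = (∑' s : {s : ℕ →₀ ℕ // J = s.support}, ∏ j ∈ J, W (s.1 j)) *
          ENNReal.ofReal ((c ^ J.card * D) ^ p) := by
        rw [← ENNReal.tsum_mul_right]
        refine tsum_congr fun s => ?_
        rw [majorantTerm, ← s.2]
    _ ≤ A ^ J.card * ENNReal.ofReal ((c ^ J.card * D) ^ p) := by
        gcongr
        simpa [prod_const] using Finsupp.tsum_prod_of_support_eq_le (fun _ => W) J
    _ = (ENNReal.ofReal (c ^ p) * A) ^ J.card * ENNReal.ofReal (D ^ p) := by
        rw [ENNReal.ofReal_mul_rpow (pow_nonneg hc _) hD, ENNReal.ofReal_pow_rpow hc]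
        ring
    _ ≤ ENNReal.ofReal (K ^ p) ^ J.card * ENNReal.ofReal (D ^ p) := by gcongr
    _ ≤ ENNReal.ofReal (K ^ p) ^ (∑ j ∈ J, k j) * ENNReal.ofReal (D ^ p) := by
        gcongr
        · exact ENNReal.one_le_ofReal.mpr (Real.one_le_rpow hK1 hp)
        · exact k.card_support_le_sum
    _ = ENNReal.ofReal (multinomialTerm (fun j => K * b j) J k ^ p) := by
        rw [multinomialTerm_const_mul, ENNReal.ofReal_mul_rpow (pow_nonneg hK0 _) hD,
          ENNReal.ofReal_pow_rpow hK0]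

theorem lp_summability_core_b_general (p θ lam c : ℝ) (r : ℕ)
    (hp0 : 0 < p) (hp1 : p ≤ 1) (hθ : 0 ≤ θ) (hlam : 0 ≤ lam) (hc : 0 ≤ c)
    (hrθ : 1 < p * ((r : ℝ) - θ)) :
    ∃ K : ℝ, 1 ≤ K ∧ ∀ b : ℕ → ℝ, (∀ j, 0 ≤ b j) →
      (∑' s : ℕ →₀ ℕ, ENNReal.ofReal ((pWeight θ lam s * betaB c r b s) ^ p)) ≤
        ∑' k : {k : ℕ →₀ ℕ // ∀ j, k j ≤ 2 * r},
          ENNReal.ofReal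
            (((∏ j ∈ k.1.support, (K * b j) ^ (k.1 j)) *
                ((∑ j ∈ k.1.support, k.1 j).factorial : ℝ) /
                  ∏ j ∈ k.1.support, ((k.1 j).factorial : ℝ)) ^ p) := by
  obtain ⟨K, hK1, hK⟩ := ENNReal.exists_one_le_le_ofReal_rpow (ENNReal.mul_ne_top
    ENNReal.ofReal_ne_top (tsum_ofReal_coordWeight_rpow_ne_top hp0.le hθ hlam hrθ)) hp0
  refine ⟨K, hK1, fun b hb => ?_⟩
  calc ∑' s : ℕ →₀ ℕ, ENNReal.ofReal ((pWeight θ lam s * betaB c r b s) ^ p)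
      ≤ ∑' s : ℕ →₀ ℕ, ∑' k : {k : ℕ →₀ ℕ // k.support = s.support ∧ ∀ j, k j ≤ 2 * r},
          majorantTerm p θ lam c r b s k :=
        ENNReal.tsum_le_tsum fun s => ofReal_rpow_pWeight_mul_betaB_le hp0 hp1 hlam hc hb s
    _ = ∑' k : {k : ℕ →₀ ℕ // ∀ j, k j ≤ 2 * r},
          ∑' s : {s : ℕ →₀ ℕ // k.1.support = s.support}, majorantTerm p θ lam c r b s k :=
        ENNReal.tsum_tsum_subtype_comm (fun s k : ℕ →₀ ℕ => k.support = s.support) _ _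
    _ ≤ _ := ENNReal.tsum_le_tsum fun k => tsum_majorantTerm_le hp0.le hc hK1 hK hb k.1

/-- Sequence-space core of the `ℓ_p`-summability theorem under the assumption `b ∈ ℓ_p`:
there is a constant `K ≥ 1`, depending only on `p, θ, λ, c, r`, such that
`Σ_{s∈F} (p_s β_s)^p ≤ Σ_{k∈F, k_j ≤ 2r} ((∏_j (K b_j)^{k_j}) |k|₁!/∏_j k_j!)^p`
(interpreted in `[0,∞]`). -/
theorem lp_summability_core_b (p θ lam c : ℝ) (r : ℕ)
    (hp0 : 0 < p) (hp1 : p ≤ 1) (hθ : 0 ≤ θ) (hlam : 0 ≤ lam) (hc : 0 ≤ c)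
    (hr : 0 < r) (hrθ : 1 < p * ((r : ℝ) - θ)) :
    ∃ K : ℝ, 1 ≤ K ∧ ∀ b : ℕ → ℝ, (∀ j, 0 ≤ b j) →
      (∑' s : ℕ →₀ ℕ, ENNReal.ofReal ((pWeight θ lam s * betaB c r b s) ^ p)) ≤
        ∑' k : {k : ℕ →₀ ℕ // ∀ j, k j ≤ 2 * r},
          ENNReal.ofReal
            (((∏ j ∈ k.1.support, (K * b j) ^ (k.1 j)) *
                ((∑ j ∈ k.1.support, k.1 j).factorial : ℝ) /
                  ∏ j ∈ k.1.support, ((k.1 j).factorial : ℝ)) ^ p) :=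
  lp_summability_core_b_general p θ lam c r hp0 hp1 hθ hlam hc hrθ
end
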